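/- arXiv:2409.08624 — 8 statements merged into one kernel-verified Lean document; each statement's English description precedes it below -/
import Mathlib

section
/- There exists an analytic equivalence relation on a Polish space which is not the connectedness relation of any Borel graph. Concretely, given an analytic non-Borel set A ⊆ X, the equivalence relation E on X × {0,1} defined by (x,i) E (y,j) iff (x,i) = (y,j) or (x = y and x ∈ A) is analytic but not Borel graphable. -/
open MeasureTheory

/-- An equivalence relation on a measurable (Polish) space is *Borel graphable* if it is the
connectedness (finite path) relation of a Borel symmetric irreflexive graph. -/
def BorelGraphable {X : Type*} [MeasurableSpace X] (E : X → X → Prop) : Prop :=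
  ∃ G : X → X → Prop, MeasurableSet {p : X × X | G p.1 p.2} ∧
    Symmetric G ∧ Irreflexive G ∧ ∀ x y, E x y ↔ Relation.ReflTransGen G x y

lemma analyticSet_union {α : Type*} [TopologicalSpace α] {s t : Set α}
    (hs : AnalyticSet s) (ht : AnalyticSet t) : AnalyticSet (s ∪ t) := by
  have : s ∪ t = ⋃ b : Bool, (if b then s else t) := by
    ext x; simp [Set.mem_iUnion, or_comm]
  rw [this]
  exact AnalyticSet.iUnion (fun b => by cases b <;> simpa)

/-- There is an analytic equivalence relation which is not Borel graphable: given an analytic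
non-Borel set `A ⊆ X`, the relation on `X × Bool` relating `(x,i)` and `(y,j)` iff they are
equal or `x = y ∈ A` is analytic, an equivalence relation, and not Borel graphable. -/
theorem stmt1 {X : Type*} [TopologicalSpace X] [PolishSpace X]
    [MeasurableSpace X] [BorelSpace X]
    (A : Set X) (hA : AnalyticSet A) (hnotBorel : ¬ MeasurableSet A)
    (E : X × Bool → X × Bool → Prop)
    (hEdef : ∀ p q : X × Bool, E p q ↔ (p = q ∨ (p.1 = q.1 ∧ p.1 ∈ A))) :
    Equivalence E ∧
    AnalyticSet {p : (X × Bool) × (X × Bool) | E p.1 p.2} ∧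
    ¬ BorelGraphable E := by
  refine ⟨⟨?_, ?_, ?_⟩, ?_, ?_⟩
  · intro p; rw [hEdef]; exact Or.inl rfl
  · intro p q h
    rw [hEdef] at h ⊢
    rcases h with h | ⟨h1, h2⟩
    · exact Or.inl h.symm
    · exact Or.inr ⟨h1.symm, h1 ▸ h2⟩
  · intro p q r hpq hqr
    rw [hEdef] at hpq hqr ⊢
    rcases hpq with rfl | ⟨h1, h2⟩
    · exact hqr
    · rcases hqr with rfl | ⟨h1', _⟩
      · exact Or.inr ⟨h1, h2⟩
      · exact Or.inr ⟨h1.trans h1', h2⟩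
  · -- analyticity
    have hset : {p : (X × Bool) × (X × Bool) | E p.1 p.2} =
        {p : (X × Bool) × (X × Bool) | p.1 = p.2} ∪
          ((fun q : X × Bool × Bool => ((q.1, q.2.1), (q.1, q.2.2))) ''
            (Prod.fst ⁻¹' A)) := by
      ext p
      simp only [Set.mem_setOf_eq, Set.mem_union, Set.mem_image, Set.mem_preimage, hEdef]
      constructor
      · rintro (h | ⟨h1, h2⟩)
        · exact Or.inl h
        · refine Or.inr ⟨(p.1.1, p.1.2, p.2.2), h2, ?_⟩
          obtain ⟨⟨x, i⟩, ⟨y, j⟩⟩ := p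
          simp only at h1
          simp [h1]
      · rintro (h | ⟨⟨x, i, j⟩, hx, hq⟩)
        · exact Or.inl h
        · right
          obtain ⟨⟨a, b⟩, ⟨c, d⟩⟩ := p
          simp only [Prod.mk.injEq] at hq
          obtain ⟨⟨rfl, rfl⟩, rfl, rfl⟩ := hq
          exact ⟨rfl, hx⟩
    rw [hset]
    apply analyticSet_union
    · exact (isClosed_eq continuous_fst continuous_snd).analyticSet
    · exact (hA.preimage continuous_fst).image_of_continuous (by fun_prop)
  · -- not Borel graphable
    rintro ⟨G, hGmeas, hsym, hirr, hiff⟩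
    apply hnotBorel
    have key : A = (fun x : X => ((x, false), (x, true))) ⁻¹'
        {p : (X × Bool) × (X × Bool) | G p.1 p.2} := by
      ext x
      simp only [Set.mem_preimage, Set.mem_setOf_eq]
      constructor
      · intro hx
        have hE : E (x, false) (x, true) := (hEdef _ _).2 (Or.inr ⟨rfl, hx⟩)
        have hrt := (hiff _ _).1 hE
        rcases Relation.ReflTransGen.cases_head hrt with heq | ⟨z, hGz, _⟩
        · simp at heq
        · have hEz : E (x, false) z := (hiff _ _).2 (Relation.ReflTransGen.single hGz)
          rcases (hEdef _ _).1 hEz with heq | ⟨h1, _⟩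
          · exact absurd hGz (heq ▸ hirr _)
          · obtain ⟨y, b⟩ := z
            simp only at h1
            subst h1
            cases b
            · exact absurd hGz (hirr _)
            · exact hGz
      · intro hG
        have hE : E (x, false) (x, true) := (hiff _ _).2 (Relation.ReflTransGen.single hG)
        rcases (hEdef _ _).1 hE with heq | ⟨_, hx⟩
        · simp at heq
        · exact hx
    rw [key]
    exact hGmeas.preimage (by fun_prop)
end

section
/- Borel graphability is preserved under invariant Borel reductions: if E and F are equivalence relations on Polish spaces X and Y respectively, f : X → Y is a Borel function with x E x' ⟺ f(x) F f(x') for all x, x', the image of f is a union of F-classes, and F is Borel graphable, then E is Borel graphable. -/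
open MeasureTheory

/-- Borel graphability is closed downward under invariant Borel reducibility. -/
theorem stmt2 {X Y : Type*} [TopologicalSpace X] [PolishSpace X]
    [MeasurableSpace X] [BorelSpace X]
    [TopologicalSpace Y] [PolishSpace Y] [MeasurableSpace Y] [BorelSpace Y]
    (E : X → X → Prop) (F : Y → Y → Prop)
    (hE : Equivalence E) (hF : Equivalence F)
    (f : X → Y) (hf : Measurable f)
    (hred : ∀ x x' : X, E x x' ↔ F (f x) (f x'))
    (hinv : ∀ y y' : Y, F y y' → y ∈ Set.range f → y' ∈ Set.range f)
    (hFgraph : BorelGraphable F) :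
    BorelGraphable E := by
  obtain ⟨G, hGmeas, hGsymm, hGirr, hGconn⟩ := hFgraph
  refine ⟨fun x x' => G (f x) (f x') ∨ (x ≠ x' ∧ f x = f x'), ?_, ?_, ?_, ?_⟩
  · have h1 : MeasurableSet {p : X × X | G (f p.1) (f p.2)} := by
      have : Measurable (fun p : X × X => (f p.1, f p.2)) :=
        (hf.comp measurable_fst).prodMk (hf.comp measurable_snd)
      exact this hGmeas
    have h2 : MeasurableSet {p : X × X | p.1 ≠ p.2 ∧ f p.1 = f p.2} := by
      have hne : MeasurableSet {p : X × X | p.1 ≠ p.2} := by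
        have : MeasurableSet {p : X × X | p.1 = p.2} := by
          have := (isClosed_diagonal (X := X)).measurableSet
          simpa [Set.diagonal] using this
        exact this.compl
      have heq : MeasurableSet {p : X × X | f p.1 = f p.2} := by
        have hdiag := (isClosed_diagonal (X := Y)).measurableSet
        have hm : Measurable (fun p : X × X => (f p.1, f p.2)) :=
          (hf.comp measurable_fst).prodMk (hf.comp measurable_snd)
        have := hm hdiag
        simpa [Set.diagonal, Set.preimage, eq_comm] using this
      exact hne.inter heq
    exact h1.union h2
  · intro x x' h
    rcases h with h | ⟨h1, h2⟩
    · exact Or.inl (hGsymm h)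
    · exact Or.inr ⟨h1.symm, h2.symm⟩
  · intro x h
    rcases h with h | ⟨h1, _⟩
    · exact hGirr _ h
    · exact h1 rfl
  · intro x x'
    constructor
    · intro h
      have hF' : Relation.ReflTransGen G (f x) (f x') := (hGconn _ _).mp ((hred x x').mp h)
      -- key claim
      have key : ∀ y : Y, Relation.ReflTransGen G (f x) y → ∀ x'' : X, f x'' = y →
          Relation.ReflTransGen (fun a b => G (f a) (f b) ∨ (a ≠ b ∧ f a = f b)) x x'' := by
        intro y hy
        induction hy with
        | refl =>
          intro x'' hx''
          by_cases hxx : x = x''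
          · exact hxx ▸ Relation.ReflTransGen.refl
          · exact Relation.ReflTransGen.single (Or.inr ⟨hxx, hx''.symm⟩)
        | tail hb hbc ih =>
          rename_i b c
          intro x'' hx''
          have hbF : F (f x) b := (hGconn _ _).mpr hb
          obtain ⟨xb, hxb⟩ := hinv _ _ hbF ⟨x, rfl⟩
          have hstep : G (f xb) (f x'') ∨ (xb ≠ x'' ∧ f xb = f x'') := by
            left; rw [hxb, hx'']; exact hbc
          exact (ih xb hxb).tail hstep
      exact key _ hF' x' rfl
    · intro h
      have : F (f x) (f x') := by
        induction h with
        | refl => exact hF.refl _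
        | tail _ hbc ih =>
          rcases hbc with hg | ⟨_, heq⟩
          · exact hF.trans ih ((hGconn _ _).mpr (Relation.ReflTransGen.single hg))
          · exact heq ▸ ih
      exact (hred x x').mpr this
end

section
/- For every analytic subset A of a Polish space X, there is a Borel graph G ⊆ A × A on X of diameter 2 such that A is a connected component of G (i.e., any two distinct points of A are joined by a path of length at most 2 in G, and all G-edges lie inside A × A). -/
/-!
If `A` is countable, the complete graph on `A` will do. Otherwise `A = f '' ℕ^ℕ` contains a
Cantor set: split closed subsets of `ℕ^ℕ` with uncountable `f`-image into two small closed pieces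
whose `f`-images are disjoint and still uncountable, and follow the resulting Cantor scheme.
This Cantor set is Borel isomorphic to `(ℕ^ℕ × ℕ^ℕ) × ℕ`, say via `e`. Join every point
`e ((u, v), n)` to `f u` and to `f v`. The graph is Borel because `e` is a Borel embedding, and two
distinct points `f u`, `f v` of `A` have the common neighbour `e ((u, v), n)` for every one of the
infinitely many `n` for which this point differs from both.
-/

open Set Function Filter Topology PiNat MeasureTheory
open scoped ENNReal

namespace CantorScheme

variable {β α : Type*} {A : List β → Set α}

theorem Disjoint.injective_of_forall_mem (hA : CantorScheme.Disjoint A) {g : (ℕ → β) → α}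
    (hg : ∀ x n, g x ∈ A (res x n)) : Injective g := by
  intro x y hxy
  apply res_injective
  ext n : 1
  induction n with
  | zero => simp
  | succ n ih =>
    simp only [res_succ, List.cons.injEq]
    refine ⟨?_, ih⟩
    by_contra hne
    have hx : g x ∈ A (x n :: res x n) := hg x (n + 1)
    have hy : g x ∈ A (y n :: res x n) := by rw [hxy, ih]; exact hg y (n + 1)
    exact Set.disjoint_left.1 (hA (res x n) hne) hx hy

end CantorScheme

theorem exists_image_ne_of_not_countable_image {Y X : Type*} [TopologicalSpace Y]
    [SecondCountableTopology Y] {f : Y → X} {S : Set Y} (hS : ¬(f '' S).Countable) :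
    ∃ y₀ ∈ S, ∃ y₁ ∈ S, f y₀ ≠ f y₁ ∧
      (∀ U ∈ 𝓝 y₀, ¬(f '' (S ∩ U)).Countable) ∧ (∀ U ∈ 𝓝 y₁, ¬(f '' (S ∩ U)).Countable) := by
  obtain ⟨b, hbc, -, hb⟩ := TopologicalSpace.exists_countable_basis Y
  -- Off `K`, `S` is covered by countably many basic sets with countable image.
  set K := {y ∈ S | ∀ U ∈ 𝓝 y, ¬(f '' (S ∩ U)).Countable}
  have hSK : f '' (S \ K) ⊆ ⋃ V ∈ {V ∈ b | (f '' (S ∩ V)).Countable}, f '' (S ∩ V) := by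
    rintro _ ⟨y, ⟨hyS, hyK⟩, rfl⟩
    obtain ⟨U, hU, hUc⟩ : ∃ U ∈ 𝓝 y, (f '' (S ∩ U)).Countable := by
      simpa [K, hyS] using hyK
    obtain ⟨V, hVb, hyV, hVU⟩ := hb.mem_nhds_iff.1 hU
    exact mem_biUnion ⟨hVb, hUc.mono (image_mono (inter_subset_inter_right S hVU))⟩
      (mem_image_of_mem f ⟨hyS, hyV⟩)
  have hK : ¬(f '' K).Countable := fun hK ↦ hS <| by
    have hcover : f '' S ⊆ f '' K ∪ f '' (S \ K) := by
      rw [← image_union, union_sdiff_self]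
      exact image_mono subset_union_right
    have hSKc : (f '' (S \ K)).Countable := by
      refine Countable.mono hSK ?_
      exact (hbc.mono (sep_subset _ _)).biUnion fun V hV ↦ hV.2
    exact (hK.union hSKc).mono hcover
  obtain ⟨_, ⟨y₀, hy₀, rfl⟩, _, ⟨y₁, hy₁, rfl⟩, hne⟩ :=
    Set.not_subsingleton_iff.1 fun h ↦ hK h.countable
  exact ⟨y₀, hy₀.1, y₁, hy₁.1, hne, hy₀.2, hy₁.2⟩

section PerfectSetTheorem

open CantorScheme

variable {Y X : Type*} [TopologicalSpace X] [T25Space X]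

theorem exists_closed_small_ediam_splitting_image [MetricSpace Y] [SecondCountableTopology Y]
    {f : Y → X} (hf : Continuous f) {U : Set Y} (hU : IsClosed U) (hUc : ¬(f '' U).Countable)
    {ε : ℝ≥0∞} (hε : 0 < ε) :
    ∃ U₀ U₁ : Set Y,
      (IsClosed U₀ ∧ ¬(f '' U₀).Countable ∧ U₀ ⊆ U ∧ Metric.ediam U₀ ≤ ε) ∧
      (IsClosed U₁ ∧ ¬(f '' U₁).Countable ∧ U₁ ⊆ U ∧ Metric.ediam U₁ ≤ ε) ∧
      Disjoint (f '' U₀) (f '' U₁) := by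
  obtain ⟨y₀, -, y₁, -, hne, h₀, h₁⟩ := exists_image_ne_of_not_countable_image hUc
  obtain ⟨V₀, hfy₀, hV₀, V₁, hfy₁, hV₁, hdisj⟩ := exists_open_nhds_disjoint_closure hne
  have piece : ∀ (y : Y) (V : Set X), (∀ W ∈ 𝓝 y, ¬(f '' (U ∩ W)).Countable) → IsOpen V →
      f y ∈ V → let P := U ∩ f ⁻¹' closure V ∩ Metric.closedEBall y (ε / 2)
      (IsClosed P ∧ ¬(f '' P).Countable ∧ P ⊆ U ∧ Metric.ediam P ≤ ε) ∧ f '' P ⊆ closure V := by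
    intro y V hy hV hfy P
    have hnhds : f ⁻¹' V ∩ Metric.eball y (ε / 2) ∈ 𝓝 y :=
      inter_mem (hf.continuousAt.preimage_mem_nhds (hV.mem_nhds hfy))
        (Metric.eball_mem_nhds y (ENNReal.half_pos hε.ne'))
    have hsub : U ∩ (f ⁻¹' V ∩ Metric.eball y (ε / 2)) ⊆ P := fun z ⟨hzU, hzV, hzy⟩ ↦
      ⟨⟨hzU, subset_closure hzV⟩, Metric.eball_subset_closedEBall hzy⟩
    refine ⟨⟨(hU.inter (isClosed_closure.preimage hf)).inter Metric.isClosed_closedEBall,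
      fun hc ↦ hy _ hnhds (hc.mono (image_mono hsub)), fun z hz ↦ hz.1.1, ?_⟩, ?_⟩
    · calc Metric.ediam P ≤ Metric.ediam (Metric.closedEBall y (ε / 2)) :=
            Metric.ediam_mono inter_subset_right
        _ ≤ 2 * (ε / 2) := Metric.ediam_closedEBall_le
        _ = ε := ENNReal.mul_div_cancel two_ne_zero ENNReal.ofNat_ne_top
    · rintro _ ⟨z, hz, rfl⟩
      exact hz.1.2
  obtain ⟨hP₀, hfP₀⟩ := piece y₀ V₀ h₀ hV₀ hfy₀
  obtain ⟨hP₁, hfP₁⟩ := piece y₁ V₁ h₁ hV₁ hfy₁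
  exact ⟨_, _, hP₀, hP₁, hdisj.mono hfP₀ hfP₁⟩

theorem Continuous.exists_nat_bool_injection_of_not_countable_range [MetricSpace Y]
    [CompleteSpace Y] [SecondCountableTopology Y] {f : Y → X} (hf : Continuous f)
    (hunc : ¬(range f).Countable) :
    ∃ g : (ℕ → Bool) → X, range g ⊆ range f ∧ Continuous g ∧ Injective g := by
  obtain ⟨u, -, upos, hu⟩ := exists_seq_strictAnti_tendsto' (zero_lt_one' ℝ≥0∞)
  let P := {U : Set Y // IsClosed U ∧ ¬(f '' U).Countable}
  choose U₀ U₁ h₀ h₁ hdisj using fun (U : P) (n : ℕ) ↦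
    exists_closed_small_ediam_splitting_image hf U.2.1 U.2.2 (upos n).1
  let child : P → ℕ → Bool → P := fun U n a ↦
    cond a ⟨U₁ U n, (h₁ U n).1, (h₁ U n).2.1⟩ ⟨U₀ U n, (h₀ U n).1, (h₀ U n).2.1⟩
  let DP : List Bool → P := fun l ↦
    l.rec ⟨univ, isClosed_univ, by rwa [image_univ]⟩ fun a l U ↦ child U l.length a
  let D : List Bool → Set Y := fun l ↦ (DP l).1
  have hanti : ClosureAntitone D := by
    refine Antitone.closureAntitone (fun l a ↦ ?_) fun l ↦ (DP l).2.1
    cases a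
    exacts [(h₀ _ _).2.2.1, (h₁ _ _).2.2.1]
  have hdiam : VanishingDiam D := by
    intro x
    rw [← tendsto_add_atTop_iff_nat 1]
    refine tendsto_of_tendsto_of_tendsto_of_le_of_le tendsto_const_nhds hu (fun _ ↦ bot_le)
      fun n ↦ ?_
    have hlen : (res x n).length = n := res_length x n
    simp only [res_succ]
    cases x n
    exacts [(h₀ _ _).2.2.2.trans_eq (congrArg u hlen), (h₁ _ _).2.2.2.trans_eq (congrArg u hlen)]
  have hdisj' : CantorScheme.Disjoint fun l ↦ f '' D l := by
    rintro l (_ | _) (_ | _) hab <;> try contradiction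
    exacts [hdisj _ _, (hdisj _ _).symm]
  have hdom : ∀ x : ℕ → Bool, x ∈ (inducedMap D).1 := fun x ↦ by
    rw [hanti.map_of_vanishingDiam hdiam fun l ↦ ?_]
    · exact mem_univ x
    · exact .of_image (nonempty_iff_ne_empty.2 fun h ↦ (DP l).2.2 (h ▸ countable_empty))
  let y : (ℕ → Bool) → Y := fun x ↦ (inducedMap D).2 ⟨x, hdom x⟩
  refine ⟨f ∘ y, range_comp_subset_range y f, hf.comp (hdiam.map_continuous.comp (by fun_prop)),
    hdisj'.injective_of_forall_mem fun x n ↦ mem_image_of_mem f (map_mem ⟨x, hdom x⟩ n)⟩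

theorem MeasureTheory.AnalyticSet.exists_nat_bool_injection_of_not_countable {A : Set X}
    (hA : AnalyticSet A) (hunc : ¬A.Countable) :
    ∃ g : (ℕ → Bool) → X, range g ⊆ A ∧ Continuous g ∧ Injective g := by
  obtain ⟨Y, _, _, f, hf, rfl⟩ := analyticSet_iff_exists_polishSpace_range.1 hA
  let := TopologicalSpace.upgradeIsCompletelyMetrizable Y
  exact hf.exists_nat_bool_injection_of_not_countable_range hunc

end PerfectSetTheorem

instance Pi.uncountable_nat {α : Type*} [Nontrivial α] : Uncountable (ℕ → α) := by
  obtain ⟨a, b, hab⟩ := exists_pair_ne α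
  have : Uncountable (ℕ → Bool) :=
    Cardinal.aleph0_lt_mk_iff.1 (by simpa using Cardinal.aleph0_lt_continuum)
  exact (Bool.injective_iff.2 hab.symm : Injective fun c ↦ cond c a b).comp_left.uncountable

section BorelGraph

variable {X : Type*} [MeasurableSpace X]

def IsBorelDiamTwoGraphOn (A : Set X) (G : X → X → Prop) : Prop :=
  MeasurableSet {p : X × X | G p.1 p.2} ∧ Symmetric G ∧ Irreflexive G ∧
    (∀ x y : X, G x y → x ∈ A ∧ y ∈ A) ∧
    (∀ x y : X, x ∈ A → y ∈ A → x ≠ y → (G x y ∨ ∃ z : X, G x z ∧ G z y))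

theorem exists_isBorelDiamTwoGraphOn_of_countable [MeasurableSingletonClass X] {A : Set X}
    (hA : A.Countable) : ∃ G, IsBorelDiamTwoGraphOn A G := by
  refine ⟨fun x y ↦ x ∈ A ∧ y ∈ A ∧ x ≠ y, ?_, fun x y h ↦ ⟨h.2.1, h.1, h.2.2.symm⟩,
    fun x h ↦ h.2.2 rfl, fun x y h ↦ ⟨h.1, h.2.1⟩, fun x y hx hy hxy ↦ .inl ⟨hx, hy, hxy⟩⟩
  have hsub : {p : X × X | p.1 ∈ A ∧ p.2 ∈ A ∧ p.1 ≠ p.2} ⊆ A ×ˢ A := fun p hp ↦ ⟨hp.1, hp.2.1⟩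
  exact ((hA.prod hA).mono hsub).measurableSet

theorem MeasurableEmbedding.measurableSet_exists_eq_apply {W Z : Type*} [MeasurableSpace W]
    [MeasurableSpace Z] {e : W → Z} (he : MeasurableEmbedding e) {S : Set (X × W)}
    (hS : MeasurableSet S) : MeasurableSet {p : X × Z | ∃ w, p.2 = e w ∧ (p.1, w) ∈ S} := by
  convert (MeasurableEmbedding.id.prodMap he).measurableSet_image.2 hS using 1
  ext ⟨x, z⟩
  constructor
  · rintro ⟨w, rfl, hw⟩
    exact ⟨(x, w), hw, rfl⟩
  · rintro ⟨⟨x', w⟩, hw, h⟩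
    obtain ⟨rfl, rfl⟩ := Prod.ext_iff.1 h
    exact ⟨w, rfl, hw⟩

theorem exists_isBorelDiamTwoGraphOn_of_embedding [MeasurableEq X] {Y : Type*}
    [MeasurableSpace Y] {A : Set X} {f : Y → X} (hf : Measurable f) (hfA : range f = A)
    {e : (Y × Y) × ℕ → X} (he : MeasurableEmbedding e) (heA : range e ⊆ A) :
    ∃ G, IsBorelDiamTwoGraphOn A G := by
  subst hfA
  let S : Set (X × ((Y × Y) × ℕ)) := {q | (q.1 = f q.2.1.1 ∨ q.1 = f q.2.1.2) ∧ q.1 ≠ e q.2}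
  let R : X → X → Prop := fun x z ↦ ∃ w, z = e w ∧ (x, w) ∈ S
  have hS : MeasurableSet S := by
    have hend : ∀ g : (Y × Y) → Y, Measurable g →
        MeasurableSet {q : X × ((Y × Y) × ℕ) | q.1 = f (g q.2.1)} := fun g hg ↦
      measurableSet_eq_fun measurable_fst (hf.comp (hg.comp (measurable_fst.comp measurable_snd)))
    exact ((hend _ measurable_fst).union (hend _ measurable_snd)).inter
      (measurableSet_eq_fun measurable_fst (he.measurable.comp measurable_snd)).compl
  have hR : MeasurableSet {p : X × X | R p.1 p.2} := he.measurableSet_exists_eq_apply hS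
  have hRA : ∀ x z, R x z → x ∈ range f ∧ z ∈ range f := by
    rintro x _ ⟨w, rfl, hx, -⟩
    exact ⟨hx.elim (fun h ↦ ⟨_, h.symm⟩) (fun h ↦ ⟨_, h.symm⟩), heA ⟨w, rfl⟩⟩
  refine ⟨fun x z ↦ R x z ∨ R z x, hR.union (hR.preimage measurable_swap), fun x z ↦ Or.symm,
    ?_, ?_, ?_⟩
  · rintro x (⟨w, rfl, -, hne⟩ | ⟨w, rfl, -, hne⟩) <;> exact hne rfl
  · rintro x z (h | h)
    exacts [hRA x z h, (hRA z x h).symm]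
  · rintro _ _ ⟨u, rfl⟩ ⟨v, rfl⟩ -
    have hinj : Injective fun n ↦ e ((u, v), n) := fun m n h ↦ congrArg Prod.snd (he.injective h)
    obtain ⟨_, ⟨n, rfl⟩, hn⟩ :=
      ((infinite_range_of_injective hinj).sdiff (toFinite {f u, f v})).nonempty
    simp only [mem_insert_iff, mem_singleton_iff, not_or] at hn
    exact .inr ⟨e ((u, v), n), .inl ⟨_, rfl, .inl rfl, Ne.symm hn.1⟩,
      .inr ⟨_, rfl, .inr rfl, Ne.symm hn.2⟩⟩

end BorelGraph

theorem MeasureTheory.AnalyticSet.exists_isBorelDiamTwoGraphOn_of_not_countable {X : Type*}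
    [TopologicalSpace X] [PolishSpace X] [MeasurableSpace X] [BorelSpace X] {A : Set X}
    (hA : AnalyticSet A) (hAc : ¬A.Countable) : ∃ G, IsBorelDiamTwoGraphOn A G := by
  obtain ⟨g, hgA, hgc, hginj⟩ := hA.exists_nat_bool_injection_of_not_countable hAc
  rw [AnalyticSet] at hA
  rcases hA with rfl | ⟨f, hf, rfl⟩
  · exact absurd countable_empty hAc
  let φ : ((ℕ → ℕ) × (ℕ → ℕ)) × ℕ ≃ᵐ (ℕ → Bool) :=
    PolishSpace.measurableEquivOfNotCountable not_countable not_countable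
  exact exists_isBorelDiamTwoGraphOn_of_embedding hf.measurable rfl
    ((hgc.isClosedEmbedding hginj).measurableEmbedding.comp φ.measurableEmbedding)
    ((range_comp_subset_range _ _).trans hgA)

/-- For every analytic subset `A` of a Polish space `X` there is a Borel graph `G ⊆ A × A`
of diameter 2 on `A`: all edges lie inside `A × A`, and any two distinct points of `A` are
joined by a path of length at most `2`.  In particular `A` is a connected component of `G`. -/
theorem stmt3 {X : Type*} [TopologicalSpace X] [PolishSpace X]
    [MeasurableSpace X] [BorelSpace X]
    (A : Set X) (hA : AnalyticSet A) :
    ∃ G : X → X → Prop, MeasurableSet {p : X × X | G p.1 p.2} ∧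
      Symmetric G ∧ Irreflexive G ∧
      (∀ x y : X, G x y → x ∈ A ∧ y ∈ A) ∧
      (∀ x y : X, x ∈ A → y ∈ A → x ≠ y → (G x y ∨ ∃ z : X, G x z ∧ G z y)) := by
  by_cases hAc : A.Countable
  exacts [exists_isBorelDiamTwoGraphOn_of_countable hAc,
    hA.exists_isBorelDiamTwoGraphOn_of_not_countable hAc]
end

section
/- If an analytic equivalence relation E on a Polish space has the Borel witness coding property, then E is Borel graphable by a Borel graph of diameter 2 (any two E-equivalent distinct points are connected by a path of length at most 2). -/
open MeasureTheory

/-- Partial functions `ℕ →. ℕ` recursive in an oracle `O : ℕ → ℕ`. -/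
inductive OracleRecursiveIn (O : ℕ → ℕ) : (ℕ →. ℕ) → Prop
  | oracle : OracleRecursiveIn O O
  | zero : OracleRecursiveIn O (fun _ => 0)
  | succ : OracleRecursiveIn O Nat.succ
  | left : OracleRecursiveIn O (fun n => (Nat.unpair n).1)
  | right : OracleRecursiveIn O (fun n => (Nat.unpair n).2)
  | pair {f g : ℕ →. ℕ} : OracleRecursiveIn O f → OracleRecursiveIn O g →
      OracleRecursiveIn O (fun n => Nat.pair <$> f n <*> g n)
  | comp {f g : ℕ →. ℕ} : OracleRecursiveIn O f → OracleRecursiveIn O g →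
      OracleRecursiveIn O (fun n => g n >>= f)
  | prec {f g : ℕ →. ℕ} : OracleRecursiveIn O f → OracleRecursiveIn O g →
      OracleRecursiveIn O (Nat.unpaired fun a n =>
        n.rec (f a) fun y IH => do let i ← IH; g (Nat.pair a (Nat.pair y i)))
  | rfind {f : ℕ →. ℕ} : OracleRecursiveIn O f →
      OracleRecursiveIn O (fun a => Nat.rfind fun n => (fun m => m = 0) <$> f (Nat.pair a n))

/-- The characteristic function (with values in `ℕ`) of an element of Cantor space. -/
def toNatFun (x : ℕ → Bool) : ℕ → ℕ := fun n => cond (x n) 1 0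

/-- Turing reducibility between elements of Cantor space. -/
def TuringLE (x y : ℕ → Bool) : Prop := OracleRecursiveIn (toNatFun y) (toNatFun x)

/-- An *unfolding* of an analytic equivalence relation `E` on `X`: a Borel set
`C ⊆ X² × 2^ℕ` with `(x,x,z) ∈ C` for all `z`, symmetric in the first two coordinates,
projecting onto `E`.  An element `z` with `C x y z` is a *witness* to `x E y`. -/
def Unfolding {X : Type*} [MeasurableSpace X] (E : X → X → Prop)
    (C : X → X → (ℕ → Bool) → Prop) : Prop :=
  MeasurableSet {p : (X × X) × (ℕ → Bool) | C p.1.1 p.1.2 p.2} ∧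
  (∀ x z, C x x z) ∧ (∀ x y z, C x y z ↔ C y x z) ∧
  (∀ x y, E x y ↔ ∃ z, C x y z)

/-- `E` has the *Borel witness coding property* if there is an unfolding `C` of `E` and a
Borel function `f : X → 2^ℕ` such that for all `x` and `a ∈ 2^ℕ` there is `y` with `x E y`
such that `f y` Turing-computes both `a` and a witness to `x E y`. -/
def BorelWitnessCoding {X : Type*} [MeasurableSpace X] (E : X → X → Prop) : Prop :=
  ∃ C : X → X → (ℕ → Bool) → Prop, Unfolding E C ∧
    ∃ f : X → ℕ → Bool, Measurable f ∧
      ∀ (x : X) (a : ℕ → Bool), ∃ y : X, E x y ∧ TuringLE a (f y) ∧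
        ∃ z : ℕ → Bool, C x y z ∧ TuringLE z (f y)

/-!
Say that `y` *codes a two-step path* from `x` if `f y` computes a name `v ∈ 2^ℕ` of a point
`g v` together with `C`-witnesses to `x E g v` and `g v E y`, where `g : 2^ℕ → X` is a Borel
surjection. The reals computable from `f y` are the outputs of countably many oracle codes run
on `f y`, so this relation is Borel; the graph joins distinct points one of which codes a
two-step path from the other. Given `x E y` with witness `z₀`, apply the coding property to `x`
and the join of a name `v` of `x` with `z₀`: the resulting `w` codes two-step paths from `x`
(through `x`, with the witness supplied for `x E w`) and from `y` (through `x`, with `z₀`),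
so `x` and `y` are at distance at most `2`.
-/

section PartMeasurable

variable {Ω α β : Type*} [MeasurableSpace Ω]

def PartMeasurable (F : Ω → Part α) : Prop := ∀ a, MeasurableSet {ω | a ∈ F ω}

theorem PartMeasurable.const (p : Part α) : PartMeasurable fun _ : Ω => p :=
  fun _ => .const _

theorem PartMeasurable.some [MeasurableSpace α] [MeasurableSingletonClass α] {f : Ω → α}
    (hf : Measurable f) : PartMeasurable fun ω => Part.some (f ω) := fun a => by
  convert hf (measurableSet_singleton a) using 1
  ext; simp [eq_comm]

theorem PartMeasurable.bind [Countable α] {F : Ω → Part α} {G : Ω → α → Part β}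
    (hF : PartMeasurable F) (hG : ∀ a, PartMeasurable (G · a)) :
    PartMeasurable fun ω => (F ω).bind (G ω) := fun b => by
  have : {ω | b ∈ (F ω).bind (G ω)} = ⋃ a, {ω | a ∈ F ω} ∩ {ω | b ∈ G ω a} := by
    ext; simp
  rw [this]
  exact .iUnion fun a => (hF a).inter (hG a b)

theorem PartMeasurable.map [Countable α] {F : Ω → Part α} (hF : PartMeasurable F)
    (g : α → β) : PartMeasurable fun ω => (F ω).map g := by
  simpa only [← Part.bind_some_eq_map] using hF.bind fun a => .const (Part.some (g a))

theorem PartMeasurable.natRec [Countable α] {F : Ω → Part α} {G : Ω → ℕ → α → Part α}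
    (hF : PartMeasurable F) (hG : ∀ y i, PartMeasurable (G · y i)) (k : ℕ) :
    PartMeasurable fun ω =>
      Nat.rec (motive := fun _ => Part α) (F ω) (fun y IH => IH.bind (G ω y)) k := by
  induction k with
  | zero => exact hF
  | succ k ih => exact ih.bind (hG k)

theorem PartMeasurable.rfind {p : Ω → ℕ → Part Bool} (hp : ∀ n, PartMeasurable (p · n)) :
    PartMeasurable fun ω => Nat.rfind (p ω) := fun v => by
  have : {ω | v ∈ Nat.rfind (p ω)} =
      {ω | true ∈ p ω v} ∩ ⋂ m, ⋂ (_ : m < v), {ω | false ∈ p ω m} := by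
    ext
    simp only [Set.mem_setOf_eq, Set.mem_inter_iff, Set.mem_iInter]
    exact Nat.mem_rfind
  rw [this]
  exact (hp v true).inter (.iInter fun m => .iInter fun _ => hp m false)

end PartMeasurable

inductive OracleCode : Type
  | oracle : OracleCode
  | zero : OracleCode
  | succ : OracleCode
  | left : OracleCode
  | right : OracleCode
  | pair : OracleCode → OracleCode → OracleCode
  | comp : OracleCode → OracleCode → OracleCode
  | prec : OracleCode → OracleCode → OracleCode
  | rfind : OracleCode → OracleCode

namespace OracleCode

def encode : OracleCode → ℕ
  | oracle => Nat.pair 0 0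
  | zero => Nat.pair 1 0
  | succ => Nat.pair 2 0
  | left => Nat.pair 3 0
  | right => Nat.pair 4 0
  | pair a b => Nat.pair 5 (Nat.pair (encode a) (encode b))
  | comp a b => Nat.pair 6 (Nat.pair (encode a) (encode b))
  | prec a b => Nat.pair 7 (Nat.pair (encode a) (encode b))
  | rfind a => Nat.pair 8 (encode a)

theorem encode_injective : Function.Injective encode := by
  intro c
  induction c <;> intro d h <;> cases d <;> simp_all [encode, Nat.pair_eq_pair] <;> grind

instance : Countable OracleCode := encode_injective.countable

def eval (O : ℕ → ℕ) : OracleCode → ℕ →. ℕ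
  | oracle => O
  | zero => fun _ => 0
  | succ => Nat.succ
  | left => fun n => (Nat.unpair n).1
  | right => fun n => (Nat.unpair n).2
  | pair cf cg => fun n => Nat.pair <$> eval O cf n <*> eval O cg n
  | comp cf cg => fun n => eval O cg n >>= eval O cf
  | prec cf cg => Nat.unpaired fun a n =>
      n.rec (eval O cf a) fun y IH => do let i ← IH; eval O cg (Nat.pair a (Nat.pair y i))
  | rfind cf => fun a => Nat.rfind fun n => (fun m => m = 0) <$> eval O cf (Nat.pair a n)

theorem oracleRecursiveIn_eval (O : ℕ → ℕ) : ∀ c : OracleCode, OracleRecursiveIn O (eval O c)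
  | oracle => .oracle
  | zero => .zero
  | succ => .succ
  | left => .left
  | right => .right
  | pair cf cg => .pair (oracleRecursiveIn_eval O cf) (oracleRecursiveIn_eval O cg)
  | comp cf cg => .comp (oracleRecursiveIn_eval O cf) (oracleRecursiveIn_eval O cg)
  | prec cf cg => .prec (oracleRecursiveIn_eval O cf) (oracleRecursiveIn_eval O cg)
  | rfind cf => .rfind (oracleRecursiveIn_eval O cf)

theorem exists_eval_eq {O : ℕ → ℕ} {F : ℕ →. ℕ} (h : OracleRecursiveIn O F) :
    ∃ c : OracleCode, eval O c = F := by
  induction h with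
  | oracle => exact ⟨oracle, rfl⟩
  | zero => exact ⟨zero, rfl⟩
  | succ => exact ⟨succ, rfl⟩
  | left => exact ⟨left, rfl⟩
  | right => exact ⟨right, rfl⟩
  | pair _ _ ihf ihg =>
      obtain ⟨cf, rfl⟩ := ihf; obtain ⟨cg, rfl⟩ := ihg; exact ⟨pair cf cg, rfl⟩
  | comp _ _ ihf ihg =>
      obtain ⟨cf, rfl⟩ := ihf; obtain ⟨cg, rfl⟩ := ihg; exact ⟨comp cf cg, rfl⟩
  | prec _ _ ihf ihg =>
      obtain ⟨cf, rfl⟩ := ihf; obtain ⟨cg, rfl⟩ := ihg; exact ⟨prec cf cg, rfl⟩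
  | rfind _ ihf =>
      obtain ⟨cf, rfl⟩ := ihf; exact ⟨rfind cf, rfl⟩

theorem partMeasurable_eval (c : OracleCode) (n : ℕ) :
    PartMeasurable fun O : ℕ → ℕ => eval O c n := by
  induction c generalizing n with
  | oracle => exact .some (measurable_pi_apply n)
  | zero | succ | left | right => exact .const _
  | pair cf cg ihf ihg =>
      simpa only [eval, Seq.seq, Part.map_eq_map, Part.bind_eq_bind, Part.bind_map]
        using (ihf n).bind fun a => (ihg n).map (Nat.pair a)
  | comp cf cg ihf ihg => exact (ihg n).bind ihf
  | prec cf cg ihf ihg => exact .natRec (ihf _) (fun _ _ => ihg _) _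
  | rfind cf ihf => exact .rfind fun k => (ihf _).map _

open Classical in
noncomputable def decode (c : OracleCode) (O : ℕ → ℕ) : ℕ → Bool :=
  fun n => decide (1 ∈ eval O c n)

def Decides (c : OracleCode) (O : ℕ → ℕ) : Prop :=
  ∀ n, 0 ∈ eval O c n ∨ 1 ∈ eval O c n

theorem eval_eq_toNatFun_iff {c : OracleCode} {O : ℕ → ℕ} {z : ℕ → Bool} :
    eval O c = ↑(toNatFun z) ↔ c.Decides O ∧ c.decode O = z := by
  constructor
  · intro h
    have hn : ∀ n, eval O c n = Part.some (cond (z n) 1 0) := fun n => by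
      rw [h]; rfl
    refine ⟨fun n => ?_, funext fun n => ?_⟩ <;> cases hz : z n <;> simp [decode, hn, hz]
  · rintro ⟨hd, rfl⟩
    funext n
    rcases hd n with h | h <;> simp [decode, Part.eq_some_iff.2 h, toNatFun]

theorem turingLE_iff_exists_code {z w : ℕ → Bool} :
    TuringLE z w ↔ ∃ c : OracleCode, c.Decides (toNatFun w) ∧ c.decode (toNatFun w) = z := by
  simp only [TuringLE, ← eval_eq_toNatFun_iff]
  exact ⟨exists_eval_eq, fun ⟨c, hc⟩ => hc ▸ oracleRecursiveIn_eval _ c⟩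

open Classical in
theorem measurable_decode (c : OracleCode) : Measurable c.decode :=
  measurable_pi_lambda _ fun n => (Measurable.of_discrete (f := fun p : Prop => decide p)).comp
    (measurableSet_setOf.mp (partMeasurable_eval c n 1))

theorem measurableSet_decides (c : OracleCode) : MeasurableSet {O | c.Decides O} := by
  simp only [Decides, Set.setOf_forall, Set.setOf_or]
  exact .iInter fun n => (partMeasurable_eval c n 0).union (partMeasurable_eval c n 1)

end OracleCode

theorem measurable_toNatFun : Measurable toNatFun :=
  measurable_pi_lambda _ fun n =>
    (Measurable.of_discrete (f := fun b : Bool => cond b 1 0)).comp (measurable_pi_apply n)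

theorem measurableSet_exists_turingLE {α : Type*} [MeasurableSpace α] {h : α → ℕ → Bool}
    (hh : Measurable h) {P : α → (ℕ → Bool) → Prop}
    (hP : MeasurableSet {q : α × (ℕ → Bool) | P q.1 q.2}) :
    MeasurableSet {a | ∃ z, TuringLE z (h a) ∧ P a z} := by
  have hO : Measurable fun a => toNatFun (h a) := measurable_toNatFun.comp hh
  have : {a | ∃ z, TuringLE z (h a) ∧ P a z} = ⋃ c : OracleCode,
      (fun a => toNatFun (h a)) ⁻¹' {O | c.Decides O} ∩
        (fun a => (a, c.decode (toNatFun (h a)))) ⁻¹' {q | P q.1 q.2} := by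
    ext a
    simp only [OracleCode.turingLE_iff_exists_code, Set.mem_setOf_eq, Set.mem_iUnion,
      Set.mem_inter_iff, Set.mem_preimage]
    constructor
    · rintro ⟨_, ⟨c, hc, rfl⟩, hP⟩
      exact ⟨c, hc, hP⟩
    · rintro ⟨c, hc, hP⟩
      exact ⟨_, ⟨c, hc, rfl⟩, hP⟩
  rw [this]
  exact .iUnion fun c => (hO c.measurableSet_decides).inter
    ((measurable_id.prodMk (c.measurable_decode.comp hO)) hP)

theorem Nat.Partrec.oracleRecursiveIn {f : ℕ →. ℕ} (hf : Nat.Partrec f) (O : ℕ → ℕ) :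
    OracleRecursiveIn O f := by
  induction hf with
  | zero => exact .zero
  | succ => exact .succ
  | left => exact .left
  | right => exact .right
  | pair _ _ pf pg => exact .pair pf pg
  | comp _ _ pf pg => exact .comp pf pg
  | prec _ _ pf pg => exact .prec pf pg
  | rfind _ pf => exact .rfind pf

theorem TuringLE.comp_primrec {x w : ℕ → Bool} (h : TuringLE x w) {g : ℕ → ℕ}
    (hg : Primrec g) : TuringLE (x ∘ g) w := by
  have := OracleRecursiveIn.comp h
    ((Nat.Partrec.of_primrec (Primrec.nat_iff.mp hg)).oracleRecursiveIn (toNatFun w))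
  exact (congrArg (OracleRecursiveIn _) (funext fun _ => Part.bind_some _ _)).mp this

def turingJoin (x y : ℕ → Bool) : ℕ → Bool :=
  fun n => if n % 2 = 0 then x (n / 2) else y (n / 2)

theorem TuringLE.of_turingJoin_left {x y w : ℕ → Bool} (h : TuringLE (turingJoin x y) w) :
    TuringLE x w := by
  convert h.comp_primrec Primrec.nat_double using 2
  funext n
  simp [turingJoin]

theorem TuringLE.of_turingJoin_right {x y w : ℕ → Bool} (h : TuringLE (turingJoin x y) w) :
    TuringLE y w := by
  convert h.comp_primrec Primrec.nat_double_succ using 2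
  funext n
  simp [turingJoin, Nat.add_mod, Nat.add_div]

section FromRel

variable {X : Type*} {R : X → X → Prop}

theorem SimpleGraph.fromRel_adj_or_exists_of_common {x y w : X} (hx : R x w) (hy : R y w)
    (hne : x ≠ y) :
    (fromRel R).Adj x y ∨ ∃ z, (fromRel R).Adj x z ∧ (fromRel R).Adj z y := by
  by_cases hwx : w = x
  · subst hwx; exact .inl ⟨hne, .inr hy⟩
  by_cases hwy : w = y
  · subst hwy; exact .inl ⟨hne, .inl hx⟩
  exact .inr ⟨w, ⟨Ne.symm hwx, .inl hx⟩, ⟨hwy, .inr hy⟩⟩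

theorem Equivalence.iff_reflTransGen_fromRel {E : X → X → Prop} (hE : Equivalence E)
    (hRE : ∀ x y, R x y → E x y) (hcommon : ∀ x y, E x y → ∃ w, R x w ∧ R y w) (x y : X) :
    E x y ↔ Relation.ReflTransGen (SimpleGraph.fromRel R).Adj x y := by
  constructor
  · intro hxy
    obtain rfl | hne := eq_or_ne x y
    · exact .refl
    obtain ⟨w, hx, hy⟩ := hcommon x y hxy
    rcases SimpleGraph.fromRel_adj_or_exists_of_common hx hy hne with h | ⟨z, hxz, hzy⟩
    exacts [.single h, .tail (.single hxz) hzy]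
  · intro h
    induction h with
    | refl => exact hE.refl x
    | tail _ hbc ih => exact hE.trans ih (hbc.2.elim (hRE _ _) (hE.symm <| hRE _ _ ·))

theorem measurableSet_fromRel_adj [MeasurableSpace X] [MeasurableEq X]
    (hR : MeasurableSet {p : X × X | R p.1 p.2}) :
    MeasurableSet {p : X × X | (SimpleGraph.fromRel R).Adj p.1 p.2} :=
  measurableSet_diagonal.compl.inter (hR.union (measurable_swap hR))

end FromRel

theorem exists_measurable_surjective_natBool (X : Type*) [TopologicalSpace X] [PolishSpace X]
    [MeasurableSpace X] [BorelSpace X] [Nonempty X] :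
    ∃ g : (ℕ → Bool) → X, Measurable g ∧ Function.Surjective g := by
  obtain ⟨r, hr⟩ := exists_measurableEmbedding_real X
  let e : ℝ ≃ᵐ (ℕ → Bool) := PolishSpace.measurableEquivNatBoolOfNotCountable not_countable
  obtain ⟨g, hg, hge⟩ :=
    (e.measurableEmbedding.comp hr).exists_measurable_extend measurable_id fun _ => ‹_›
  exact ⟨g, hg, fun x => ⟨e (r x), congrFun hge x⟩⟩

section CodedTwoStep

variable {X : Type*} (C : X → X → (ℕ → Bool) → Prop) (f : X → ℕ → Bool)
  (g : (ℕ → Bool) → X)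

def CodedTwoStep (x y : X) : Prop :=
  ∃ v, TuringLE v (f y) ∧ ∃ z₁, TuringLE z₁ (f y) ∧ ∃ z₂, TuringLE z₂ (f y) ∧
    C x (g v) z₁ ∧ C (g v) y z₂

variable {C f g}

theorem measurableSet_codedTwoStep [MeasurableSpace X]
    (hC : MeasurableSet {p : (X × X) × (ℕ → Bool) | C p.1.1 p.1.2 p.2})
    (hf : Measurable f) (hg : Measurable g) :
    MeasurableSet {p : X × X | CodedTwoStep C f g p.1 p.2} := by
  refine measurableSet_exists_turingLE (hf.comp measurable_snd) ?_
  refine measurableSet_exists_turingLE (hf.comp (measurable_snd.comp measurable_fst)) ?_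
  refine measurableSet_exists_turingLE
    (hf.comp (measurable_snd.comp (measurable_fst.comp measurable_fst))) ?_
  have h₁ : Measurable fun q : (((X × X) × (ℕ → Bool)) × (ℕ → Bool)) × (ℕ → Bool) =>
      ((q.1.1.1.1, g q.1.1.2), q.1.2) := by fun_prop
  have h₂ : Measurable fun q : (((X × X) × (ℕ → Bool)) × (ℕ → Bool)) × (ℕ → Bool) =>
      ((g q.1.1.2, q.1.1.1.2), q.2) := by fun_prop
  exact (h₁ hC).inter (h₂ hC)

theorem CodedTwoStep.rel [MeasurableSpace X] {E : X → X → Prop} (hE : Equivalence E)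
    (hC : Unfolding E C) {x y : X} (h : CodedTwoStep C f g x y) : E x y := by
  obtain ⟨v, -, z₁, -, z₂, -, h₁, h₂⟩ := h
  exact hE.trans ((hC.2.2.2 _ _).2 ⟨z₁, h₁⟩) ((hC.2.2.2 _ _).2 ⟨z₂, h₂⟩)

theorem CodedTwoStep.exists_common [MeasurableSpace X] {E : X → X → Prop} (hC : Unfolding E C)
    (hcode : ∀ (x : X) (a : ℕ → Bool), ∃ y : X, E x y ∧ TuringLE a (f y) ∧
      ∃ z : ℕ → Bool, C x y z ∧ TuringLE z (f y))
    (hg : Function.Surjective g) {x y : X} (hxy : E x y) :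
    ∃ w, CodedTwoStep C f g x w ∧ CodedTwoStep C f g y w := by
  obtain ⟨-, hCrefl, hCsymm, hCE⟩ := hC
  obtain ⟨z₀, hz₀⟩ := (hCE x y).1 hxy
  obtain ⟨v, rfl⟩ := hg x
  obtain ⟨w, -, hjoin, z₁, hz₁, hz₁w⟩ := hcode (g v) (turingJoin v z₀)
  have hv := hjoin.of_turingJoin_left
  exact ⟨w, ⟨v, hv, z₁, hz₁w, z₁, hz₁w, hCrefl _ _, hz₁⟩,
    ⟨v, hv, z₀, hjoin.of_turingJoin_right, z₁, hz₁w, (hCsymm _ _ _).1 hz₀, hz₁⟩⟩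

end CodedTwoStep

theorem stmt4_general {X : Type*} [TopologicalSpace X] [PolishSpace X]
    [MeasurableSpace X] [BorelSpace X]
    (E : X → X → Prop) (hE : Equivalence E)
    (hwc : BorelWitnessCoding E) :
    ∃ G : X → X → Prop, MeasurableSet {p : X × X | G p.1 p.2} ∧
      Symmetric G ∧ Irreflexive G ∧
      (∀ x y, E x y ↔ Relation.ReflTransGen G x y) ∧
      (∀ x y, E x y → x ≠ y → (G x y ∨ ∃ z, G x z ∧ G z y)) := by
  obtain ⟨C, hC, f, hf, hcode⟩ := hwc
  rcases isEmpty_or_nonempty X with _ | _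
  · exact ⟨fun _ _ => False, by simp, fun _ _ => id, fun _ => id, isEmptyElim, isEmptyElim⟩
  obtain ⟨g, hg, hgsurj⟩ := exists_measurable_surjective_natBool X
  have hRE : ∀ x y, CodedTwoStep C f g x y → E x y := fun _ _ => CodedTwoStep.rel hE hC
  have hcommon : ∀ x y, E x y → ∃ w, CodedTwoStep C f g x w ∧ CodedTwoStep C f g y w :=
    fun _ _ => CodedTwoStep.exists_common hC hcode hgsurj
  refine ⟨(SimpleGraph.fromRel (CodedTwoStep C f g)).Adj,
    measurableSet_fromRel_adj (measurableSet_codedTwoStep hC.1 hf hg),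
    fun _ _ h => h.symm, fun _ => SimpleGraph.irrefl _, hE.iff_reflTransGen_fromRel hRE hcommon,
    fun x y hxy hne => ?_⟩
  obtain ⟨w, hx, hy⟩ := hcommon x y hxy
  exact SimpleGraph.fromRel_adj_or_exists_of_common hx hy hne

/-- If an analytic equivalence relation has the Borel witness coding property, then it is
Borel graphable by a Borel graph of diameter `2`. -/
theorem stmt4 {X : Type*} [TopologicalSpace X] [PolishSpace X]
    [MeasurableSpace X] [BorelSpace X]
    (E : X → X → Prop) (hE : Equivalence E)
    (hA : AnalyticSet {p : X × X | E p.1 p.2})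
    (hwc : BorelWitnessCoding E) :
    ∃ G : X → X → Prop, MeasurableSet {p : X × X | G p.1 p.2} ∧
      Symmetric G ∧ Irreflexive G ∧
      (∀ x y, E x y ↔ Relation.ReflTransGen G x y) ∧
      (∀ x y, E x y → x ≠ y → (G x y ∨ ∃ z, G x z ∧ G z y)) :=
  stmt4_general E hE hwc
end

section
/- Let 𝓛 be a countable language and let M, N be trivial 𝓛-structures with domain ℕ that are isomorphic. Then any bijection g : M → N which agrees on the finite witnessing set F with some isomorphism f : M → N is itself an isomorphism. Consequently there is a computable isomorphism between M and N. -/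
open FirstOrder FirstOrder.Language

/-- `g : ℕ → ℕ` is an isomorphism from the `L`-structure `SM` to the `L`-structure `SN`
(both with domain `ℕ`). -/
def IsIsoOn (L : Language) (SM SN : L.Structure ℕ) (g : ℕ → ℕ) : Prop :=
  Function.Bijective g ∧
  (∀ (n : ℕ) (f : L.Functions n) (v : Fin n → ℕ), g (SM.funMap f v) = SN.funMap f (g ∘ v)) ∧
  (∀ (n : ℕ) (r : L.Relations n) (v : Fin n → ℕ), SM.RelMap r v ↔ SN.RelMap r (g ∘ v))

/-- The finite set `F` witnesses that the `L`-structure `SM` on `ℕ` is *trivial*: any two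
tuples of distinct elements of `ℕ ∖ F` of the same length have the same quantifier-free
type over `F`. -/
def TrivialWith (L : Language) (SM : L.Structure ℕ) (F : Finset ℕ) : Prop :=
  letI := SM
  ∀ (k : ℕ) (v w : Fin k → ℕ), Function.Injective v → Function.Injective w →
    (∀ i, v i ∉ F) → (∀ i, w i ∉ F) →
    ∀ φ : L.Formula ({x // x ∈ F} ⊕ Fin k), φ.IsQF →
      (φ.Realize (Sum.elim (fun x => (x.1 : ℕ)) v) ↔
        φ.Realize (Sum.elim (fun x => (x.1 : ℕ)) w))


def Carrier (L : Language) (_S : L.Structure ℕ) : Type := ℕ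
instance carrierStructure (L : Language) (S : L.Structure ℕ) : L.Structure (Carrier L S) := S

noncomputable def isoToEquiv {L : Language} {SM SN : L.Structure ℕ} (f : ℕ → ℕ) (hf : IsIsoOn L SM SN f) :
    Carrier L SM ≃[L] Carrier L SN where
  toEquiv := Equiv.ofBijective f hf.1
  map_fun' := fun {n} fn x => hf.2.1 n fn x
  map_rel' := fun {n} r x => (hf.2.2 n r x).symm

lemma realize_transfer {L : Language} {SM SN : L.Structure ℕ} (f : ℕ → ℕ)
    (hf : IsIsoOn L SM SN f) {α : Type} (φ : L.Formula α) (x : α → ℕ) :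
    @Formula.Realize L ℕ SM α φ x ↔ @Formula.Realize L ℕ SN α φ (f ∘ x) :=
  (StrongHomClass.realize_formula (M := Carrier L SM) (N := Carrier L SN) (isoToEquiv f hf) φ (v := x)).symm

lemma decomp (F : Finset ℕ) {m : ℕ} (u : Fin m → ℕ) :
    ∃ (k : ℕ) (w : Fin k → ℕ) (σ : Fin m → {x // x ∈ F} ⊕ Fin k),
      Function.Injective w ∧ (∀ i, w i ∉ F) ∧
      ∀ i, Sum.elim (fun x => (x.1 : ℕ)) w (σ i) = u i := by
  classical
  set T : Finset ℕ := Finset.image u Finset.univ \ F with hT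
  refine ⟨T.card, fun j => ((T.equivFin.symm j : ℕ)), fun i =>
    if h : u i ∈ F then Sum.inl ⟨u i, h⟩ else Sum.inr (T.equivFin ⟨u i, by
      simp [hT, Finset.mem_sdiff, h]⟩), ?_, ?_, ?_⟩
  · intro j₁ j₂ hj
    exact T.equivFin.symm.injective (Subtype.coe_injective hj)
  · intro j
    exact (Finset.mem_sdiff.mp (T.equivFin.symm j).2).2
  · intro i
    by_cases h : u i ∈ F
    · simp [h]
    · simp [h]

lemma key {L : Language} {SM SN : L.Structure ℕ} (F : Finset ℕ)
    (hTriv : TrivialWith L SM F) (f g : ℕ → ℕ)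
    (hf : IsIsoOn L SM SN f) (hg : Function.Bijective g) (hagree : ∀ a ∈ F, g a = f a)
    {k : ℕ} (w : Fin k → ℕ) (hw : Function.Injective w) (hwF : ∀ i, w i ∉ F)
    (φ : L.Formula ({x // x ∈ F} ⊕ Fin k)) (hφ : φ.IsQF) :
    (@Formula.Realize L ℕ SM _ φ (Sum.elim (fun x => (x.1 : ℕ)) w) ↔
      @Formula.Realize L ℕ SN _ φ (Sum.elim (fun x => g x.1) (g ∘ w))) := by
  set E := Equiv.ofBijective f hf.1 with hE
  have hEf : ∀ a, E a = f a := fun a => rfl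
  set w' : Fin k → ℕ := fun i => E.symm (g (w i)) with hw'def
  have hcomp : Sum.elim (fun x : {x // x ∈ F} => g x.1) (g ∘ w)
      = f ∘ Sum.elim (fun x => (x.1 : ℕ)) w' := by
    funext z
    cases z with
    | inl a => exact (hagree a.1 a.2)
    | inr i =>
      show g (w i) = f (E.symm (g (w i)))
      rw [← hEf, E.apply_symm_apply]
  have hw'inj : Function.Injective w' := fun i j hij =>
    hw (hg.1 (E.symm.injective hij))
  have hw'F : ∀ i, w' i ∉ F := by
    intro i hmem
    have h1 : f (w' i) = g (w i) := by rw [← hEf]; exact E.apply_symm_apply _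
    have h2 : g (w' i) = g (w i) := by rw [hagree _ hmem]; exact h1
    exact hwF i (hg.1 h2 ▸ hmem)
  calc @Formula.Realize L ℕ SM _ φ (Sum.elim (fun x => (x.1 : ℕ)) w)
      ↔ @Formula.Realize L ℕ SM _ φ (Sum.elim (fun x => (x.1 : ℕ)) w') :=
        hTriv k w w' hw hw'inj hwF hw'F φ hφ
    _ ↔ @Formula.Realize L ℕ SN _ φ (Sum.elim (fun x => g x.1) (g ∘ w)) := by
        rw [hcomp]; exact realize_transfer f hf φ _

lemma iso_of_agree {L : Language} {SM SN : L.Structure ℕ} (F : Finset ℕ)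
    (hTriv : TrivialWith L SM F) (f : ℕ → ℕ) (hf : IsIsoOn L SM SN f)
    (g : ℕ → ℕ) (hg : Function.Bijective g) (hagree : ∀ a ∈ F, g a = f a) :
    IsIsoOn L SM SN g := by
  have helimg : ∀ {k : ℕ} (w : Fin k → ℕ),
      Sum.elim (fun x : {x // x ∈ F} => g x.1) (g ∘ w)
        = g ∘ Sum.elim (fun x => (x.1 : ℕ)) w := by
    intro k w; funext z; cases z <;> rfl
  refine ⟨hg, ?_, ?_⟩
  · intro n fn v
    obtain ⟨k, w, σ, hwin, hwF, hσ⟩ := decomp F (Fin.snoc v (SM.funMap fn v))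
    set φ : L.Formula ({x // x ∈ F} ⊕ Fin k) :=
      Term.equal (Term.func fn (fun i => Term.var (σ i.castSucc))) (Term.var (σ (Fin.last n)))
      with hφdef
    have hqf : φ.IsQF := (BoundedFormula.IsAtomic.equal _ _).isQF
    have h1 : @Formula.Realize L ℕ SM _ φ (Sum.elim (fun x => (x.1 : ℕ)) w) := by
      rw [hφdef]
      rw [@Formula.realize_equal L ℕ SM]
      simp only [Term.realize_func, Term.realize_var]
      simp only [hσ, Fin.snoc_castSucc, Fin.snoc_last]
    have h2 := (key F hTriv f g hf hg hagree w hwin hwF φ hqf).mp h1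
    rw [helimg, hφdef, @Formula.realize_equal L ℕ SN] at h2
    simp only [Term.realize_func, Term.realize_var, Function.comp_apply] at h2
    simp only [hσ, Fin.snoc_castSucc, Fin.snoc_last] at h2
    exact h2.symm
  · intro n r v
    obtain ⟨k, w, σ, hwin, hwF, hσ⟩ := decomp F v
    set φ : L.Formula ({x // x ∈ F} ⊕ Fin k) :=
      Relations.formula r (fun i => Term.var (σ i)) with hφdef
    have hqf : φ.IsQF := (BoundedFormula.IsAtomic.rel _ _).isQF
    have h1 : @Formula.Realize L ℕ SM _ φ (Sum.elim (fun x => (x.1 : ℕ)) w)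
        ↔ SM.RelMap r v := by
      rw [hφdef, @Formula.realize_rel L ℕ SM]
      simp only [Term.realize_var, hσ]
    have h2 : @Formula.Realize L ℕ SN _ φ (Sum.elim (fun x => g x.1) (g ∘ w))
        ↔ SN.RelMap r (g ∘ v) := by
      rw [helimg, hφdef, @Formula.realize_rel L ℕ SN]
      simp only [Term.realize_var, Function.comp_apply, hσ]
      rfl
    rw [← h1, ← h2]
    exact key F hTriv f g hf hg hagree w hwin hwF φ hqf

lemma exists_computable_bij_agree (F : Finset ℕ) (f : ℕ → ℕ) (hfinj : Function.Injective f) :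
    ∃ h : ℕ → ℕ, Computable h ∧ Function.Bijective h ∧ ∀ a ∈ F, h a = f a := by
  classical
  set N₀ : ℕ := (F ∪ F.image f).sup Nat.succ with hN₀
  have hmem_lt : ∀ a ∈ F ∪ F.image f, a < N₀ := fun a ha =>
    Nat.lt_of_succ_le (Finset.le_sup (f := Nat.succ) ha)
  have hFlt : ∀ a ∈ F, a < N₀ := fun a ha => hmem_lt a (Finset.mem_union_left _ ha)
  have hfFlt : ∀ a ∈ F, f a < N₀ := fun a ha =>
    hmem_lt _ (Finset.mem_union_right _ (Finset.mem_image_of_mem f ha))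
  set p : Fin N₀ → Prop := fun x => (x : ℕ) ∈ F with hp
  set q : Fin N₀ → Prop := fun x => (x : ℕ) ∈ F.image f with hq
  set e0 : {x : Fin N₀ // p x} → {x : Fin N₀ // q x} := fun x =>
    ⟨⟨f x.1, hfFlt _ x.2⟩, Finset.mem_image_of_mem f x.2⟩ with he0
  have hbij : Function.Bijective e0 := by
    constructor
    · intro x y hxy
      simp only [he0, Subtype.mk.injEq, Fin.mk.injEq] at hxy
      exact Subtype.ext (Fin.ext (hfinj hxy))
    · rintro ⟨y, hy⟩
      obtain ⟨a, ha, hfa⟩ := Finset.mem_image.mp hy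
      refine ⟨⟨⟨a, hFlt a ha⟩, ha⟩, ?_⟩
      simp only [he0]
      exact Subtype.ext (Fin.ext hfa)
  set e : {x : Fin N₀ // p x} ≃ {x : Fin N₀ // q x} := Equiv.ofBijective e0 hbij with he
  set τ : Equiv.Perm (Fin N₀) := e.extendSubtype with hτ
  set lst : List ℕ := (List.finRange N₀).map (fun i => ((τ i : Fin N₀) : ℕ)) with hlst
  set h : ℕ → ℕ := fun x => if x < N₀ then lst.getD x 0 else x with hh
  have hlen : lst.length = N₀ := by simp [hlst]
  have hval : ∀ (x : ℕ) (hx : x < N₀), h x = (τ ⟨x, hx⟩ : ℕ) := by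
    intro x hx
    rw [hh]
    simp only [if_pos hx]
    rw [List.getD_eq_getElem _ _ (by rw [hlen]; exact hx)]
    simp [hlst]
  have hval' : ∀ x : ℕ, ¬ x < N₀ → h x = x := fun x hx => by rw [hh]; simp [if_neg hx]
  refine ⟨h, ?_, ?_, ?_⟩
  · have : Primrec h := by
      rw [hh]
      exact Primrec.ite
        (Primrec.nat_lt.comp Primrec.id (Primrec.const N₀))
        ((Primrec.list_getD 0).comp (Primrec.const lst) Primrec.id)
        Primrec.id
    exact this.to_comp
  · set h' : ℕ → ℕ := fun x => if hx : x < N₀ then (τ.symm ⟨x, hx⟩ : ℕ) else x with hh'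
    have hval2 : ∀ (x : ℕ) (hx : x < N₀), h' x = (τ.symm ⟨x, hx⟩ : ℕ) := by
      intro x hx
      simp only [hh']
      rw [dif_pos hx]
    have hval2' : ∀ x : ℕ, ¬ x < N₀ → h' x = x := by
      intro x hx
      simp only [hh']
      rw [dif_neg hx]
    have hli : Function.LeftInverse h' h := by
      intro x
      by_cases hx : x < N₀
      · rw [hval x hx]
        have hlt : ((τ ⟨x, hx⟩ : Fin N₀) : ℕ) < N₀ := (τ ⟨x, hx⟩).2
        rw [hval2 _ hlt]
        simp
      · rw [hval' x hx, hval2' x hx]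
    have hri : Function.RightInverse h' h := by
      intro x
      by_cases hx : x < N₀
      · rw [hval2 x hx]
        have hlt : ((τ.symm ⟨x, hx⟩ : Fin N₀) : ℕ) < N₀ := (τ.symm ⟨x, hx⟩).2
        rw [hval _ hlt]
        simp
      · rw [hval2' x hx, hval' x hx]
    exact ⟨hli.injective, hri.surjective⟩
  · intro a ha
    have hlt := hFlt a ha
    rw [hval a hlt]
    have h1 : τ ⟨a, hlt⟩ = e ⟨⟨a, hlt⟩, ha⟩ := e.extendSubtype_apply_of_mem _ ha
    rw [h1, he]
    simp only [Equiv.ofBijective_apply, he0]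

/-- If `M` and `N` are trivial isomorphic `L`-structures with domain `ℕ` (triviality of `M`
witnessed by the finite set `F`), then every bijection `g` agreeing on `F` with an
isomorphism `f : M → N` is itself an isomorphism; consequently there is a computable
isomorphism between `M` and `N`. -/
theorem stmt7 (L : Language) (hL : Countable L.Symbols)
    (SM SN : L.Structure ℕ) (F : Finset ℕ) (hTriv : TrivialWith L SM F)
    (f : ℕ → ℕ) (hf : IsIsoOn L SM SN f)
    (g : ℕ → ℕ) (hg : Function.Bijective g) (hagree : ∀ a ∈ F, g a = f a) :
    IsIsoOn L SM SN g ∧ ∃ h : ℕ → ℕ, Computable h ∧ IsIsoOn L SM SN h := by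
  refine ⟨iso_of_agree F hTriv f hf g hg hagree, ?_⟩
  obtain ⟨h, hcomp, hbij, hag⟩ := exists_computable_bij_agree F f hf.1.1
  exact ⟨h, hcomp, iso_of_agree F hTriv f hf h hbij hag⟩
end

section
/- The class of Borel graphable equivalence relations is not closed under taking subequivalence relations: there exist analytic equivalence relations E' ⊆ E'' on a Polish space Y such that E'' is Borel graphable but E' is not. -/
/-!
Take an analytic non-Borel set `A` of Baire space, obtained by diagonalising against an
analytic set that is universal for the analytic subsets of Baire space. The relation `E''`
"same tail" is closed, hence Borel graphable by its own off-diagonal part. Its subrelation `E'`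
keeps only the pairs `{0a, 1a}` with `a ∈ A` (`ka` is `a` with `k` prepended). Any graph
generating `E'` must contain the edge `(0a, 1a)` exactly when `a ∈ A`, so a Borel such graph would make `A` Borel.
-/

open MeasureTheory Set Relation

namespace MeasureTheory.AnalyticSet

variable {X : Type*} [TopologicalSpace X] {s t : Set X}

lemma union (hs : AnalyticSet s) (ht : AnalyticSet t) : AnalyticSet (s ∪ t) := by
  rw [union_eq_iUnion]
  exact .iUnion fun b => by cases b <;> assumption

lemma inter [T2Space X] (hs : AnalyticSet s) (ht : AnalyticSet t) : AnalyticSet (s ∩ t) := by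
  rw [inter_eq_iInter]
  exact .iInter fun b => by cases b <;> assumption

lemma exists_isClosed_image_fst [T2Space X] (hs : AnalyticSet s) :
    ∃ C : Set (X × (ℕ → ℕ)), IsClosed C ∧ Prod.fst '' C = s := by
  rw [AnalyticSet_def] at hs
  rcases hs with rfl | ⟨f, hf, rfl⟩
  · exact ⟨∅, isClosed_empty, image_empty _⟩
  · refine ⟨{p | f p.2 = p.1}, isClosed_eq (hf.comp continuous_snd) continuous_fst, ?_⟩
    ext x
    simp [eq_comm]

end MeasureTheory.AnalyticSet

section Universal

variable {X Y : Type*}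

lemma exists_isClosed_forall_isClosed_eq_section [TopologicalSpace Y]
    [SecondCountableTopology Y] :
    ∃ F : Set ((ℕ → ℕ) × Y), IsClosed F ∧
      ∀ C : Set Y, IsClosed C → ∃ z, ∀ y, (z, y) ∈ F ↔ y ∈ C := by
  classical
  obtain ⟨b, hb⟩ := TopologicalSpace.exists_seq_basis Y
  -- the parameter `z` codes the closed set `⋂ {(b n)ᶜ | z n ≠ 0}`
  refine ⟨⋂ n, {p | p.1 n = 0} ∪ Prod.snd ⁻¹' (b n)ᶜ, ?_, fun C hC => ?_⟩
  · refine isClosed_iInter fun n => .union ?_ ?_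
    · exact isClosed_eq ((continuous_apply n).comp continuous_fst) continuous_const
    · exact (hb.isOpen (mem_range_self n)).isClosed_compl.preimage continuous_snd
  refine ⟨fun n => if b n ⊆ Cᶜ then 1 else 0, fun y => ?_⟩
  simp only [mem_iInter, mem_union, mem_ofPred_eq, mem_preimage, mem_compl_iff]
  constructor
  · intro h
    by_contra hy
    obtain ⟨_, ⟨n, rfl⟩, hyn, hnC⟩ := hb.exists_subset_of_mem_open hy hC.isOpen_compl
    exact (h n).elim (by simp [hnC]) (· hyn)
  · intro hy n
    by_cases hn : b n ⊆ Cᶜ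
    · exact Or.inr fun hyn => hn hyn hy
    · simp [hn]

lemma exists_analyticSet_forall_analyticSet_eq_section [TopologicalSpace X] [PolishSpace X] :
    ∃ U : Set ((ℕ → ℕ) × X), AnalyticSet U ∧
      ∀ s : Set X, AnalyticSet s → ∃ z, ∀ x, (z, x) ∈ U ↔ x ∈ s := by
  obtain ⟨F, hF, hFuniv⟩ := exists_isClosed_forall_isClosed_eq_section (Y := X × (ℕ → ℕ))
  refine ⟨(fun q => (q.1, q.2.1)) '' F, hF.analyticSet.image_of_continuous (by fun_prop),
    fun s hs => ?_⟩
  obtain ⟨C, hC, rfl⟩ := hs.exists_isClosed_image_fst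
  obtain ⟨z, hz⟩ := hFuniv C hC
  refine ⟨z, fun x => ?_⟩
  simp [hz]

theorem exists_analyticSet_not_measurableSet :
    ∃ A : Set (ℕ → ℕ), AnalyticSet A ∧ ¬ MeasurableSet A := by
  obtain ⟨U, hU, hUuniv⟩ := exists_analyticSet_forall_analyticSet_eq_section (X := ℕ → ℕ)
  refine ⟨{x | (x, x) ∈ U}, hU.preimage (by fun_prop), fun hA => ?_⟩
  obtain ⟨z, hz⟩ := hUuniv _ hA.compl.analyticSet
  simpa using hz z

end Universal

lemma Relation.ReflTransGen.head_of_forall_eq {α : Type*} {r : α → α → Prop} {x y : α}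
    (h : ReflTransGen r x y) (hxy : x ≠ y) (hr : ∀ z, r x z → z = y) : r x y := by
  obtain rfl | ⟨z, hxz, -⟩ := h.cases_head
  · exact absurd rfl hxy
  · exact hr z hxz ▸ hxz

section Graphable

variable {X Z : Type*} [MeasurableSpace X] {E : X → X → Prop}

lemma BorelGraphable.of_measurableSet [MeasurableEq X] (hE : Equivalence E)
    (h : MeasurableSet {p : X × X | E p.1 p.2}) : BorelGraphable E := by
  refine ⟨fun x y => x ≠ y ∧ E x y, measurableSet_diagonal.compl.inter h,
    fun x y hxy => ⟨hxy.1.symm, hE.symm hxy.2⟩, fun x hx => hx.1 rfl, fun x y => ⟨?_, ?_⟩⟩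
  · intro hxy
    by_cases h : x = y
    · exact h ▸ .refl
    · exact .single ⟨h, hxy⟩
  · intro h
    induction h with
    | refl => exact hE.refl x
    | tail _ hyz ih => exact hE.trans ih hyz.2

/-- A graph generating `E` must join `f z` directly to `g z`, its only possible neighbour. -/
lemma BorelGraphable.measurableSet_setOf_of_forall_eq_or_eq [MeasurableSpace Z]
    (hE : BorelGraphable E) {f g : Z → X} (hf : Measurable f) (hg : Measurable g)
    (hfg : ∀ z, f z ≠ g z) (hclass : ∀ z x, E (f z) x → x = f z ∨ x = g z) :
    MeasurableSet {z | E (f z) (g z)} := by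
  obtain ⟨G, hGmeas, -, hGirr, hGE⟩ := hE
  have hG : ∀ z, E (f z) (g z) ↔ G (f z) (g z) := fun z =>
    ⟨fun h => ((hGE _ _).1 h).head_of_forall_eq (hfg z) fun x hx =>
        ((hclass z x) ((hGE _ _).2 (.single hx))).resolve_left fun h => hGirr _ (h ▸ hx),
      fun h => (hGE _ _).2 (.single h)⟩
  simp_rw [hG]
  exact hGmeas.preimage (hf.prodMk hg)

end Graphable

section RestrictRel

variable {X : Type*} {E : X → X → Prop} {S : Set X}

def restrictRel (E : X → X → Prop) (S : Set X) (x y : X) : Prop :=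
  x = y ∨ (x ∈ S ∧ y ∈ S ∧ E x y)

lemma Equivalence.restrictRel (hE : Equivalence E) (S : Set X) :
    Equivalence (restrictRel E S) := by
  refine ⟨fun x => .inl rfl, ?_, ?_⟩
  · rintro x y (rfl | ⟨hx, hy, hxy⟩)
    exacts [.inl rfl, .inr ⟨hy, hx, hE.symm hxy⟩]
  · rintro x y z (rfl | ⟨hx, hy, hxy⟩) (rfl | ⟨hy', hz, hyz⟩)
    exacts [.inl rfl, .inr ⟨hy', hz, hyz⟩, .inr ⟨hx, hy, hxy⟩,
      .inr ⟨hx, hz, hE.trans hxy hyz⟩]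

lemma restrictRel_le (hE : ∀ x, E x x) {x y : X} (h : restrictRel E S x y) : E x y := by
  obtain rfl | ⟨-, -, hxy⟩ := h
  exacts [hE x, hxy]

lemma MeasureTheory.AnalyticSet.setOf_restrictRel [TopologicalSpace X] [PolishSpace X]
    (hS : AnalyticSet S) (hE : AnalyticSet {p : X × X | E p.1 p.2}) :
    AnalyticSet {p : X × X | restrictRel E S p.1 p.2} := by
  have hdiag : AnalyticSet {p : X × X | p.1 = p.2} :=
    (isClosed_eq continuous_fst continuous_snd).analyticSet
  have hSS : AnalyticSet (Prod.fst ⁻¹' S ∩ Prod.snd ⁻¹' S : Set (X × X)) :=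
    (hS.preimage continuous_fst).inter (hS.preimage continuous_snd)
  convert hdiag.union (hSS.inter hE) using 1
  ext p
  simp [restrictRel, and_assoc]

end RestrictRel

section Baire

def prepend {α : Type*} (k : α) (a : ℕ → α) : ℕ → α
  | 0 => k
  | n + 1 => a n

lemma continuous_prepend {α : Type*} [TopologicalSpace α] (k : α) : Continuous (prepend k) :=
  continuous_pi fun n => by
    cases n with
    | zero => exact continuous_const
    | succ n => exact continuous_apply n

@[simp]
lemma prepend_zero {α : Type*} (k : α) (a : ℕ → α) : prepend k a 0 = k := rfl

@[simp]
lemma prepend_comp_succ {α : Type*} (k : α) (a : ℕ → α) : prepend k a ∘ Nat.succ = a := rfl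

lemma prepend_head_tail {α : Type*} (x : ℕ → α) : prepend (x 0) (x ∘ Nat.succ) = x := by
  funext n
  cases n <;> rfl

def SameTail (x y : ℕ → ℕ) : Prop := x ∘ Nat.succ = y ∘ Nat.succ

lemma equivalence_sameTail : Equivalence SameTail :=
  ⟨fun _ => rfl, Eq.symm, Eq.trans⟩

lemma isClosed_setOf_sameTail : IsClosed {p : (ℕ → ℕ) × (ℕ → ℕ) | SameTail p.1 p.2} :=
  isClosed_eq (by fun_prop) (by fun_prop)

def tailIn (A : Set (ℕ → ℕ)) : Set (ℕ → ℕ) := {x | x 0 ≤ 1 ∧ x ∘ Nat.succ ∈ A}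

lemma MeasureTheory.AnalyticSet.tailIn {A : Set (ℕ → ℕ)} (hA : AnalyticSet A) :
    AnalyticSet (tailIn A) :=
  (isClosed_le (continuous_apply 0) continuous_const).analyticSet.inter (hA.preimage (by fun_prop))

lemma not_borelGraphable_restrictRel_sameTail {A : Set (ℕ → ℕ)} (hA : ¬ MeasurableSet A) :
    ¬ BorelGraphable (restrictRel SameTail (tailIn A)) := by
  intro hE
  have hclass : ∀ a x, restrictRel SameTail (tailIn A) (prepend 0 a) x →
      x = prepend 0 a ∨ x = prepend 1 a := by
    rintro a x (rfl | ⟨-, ⟨hx0, -⟩, htail⟩)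
    · exact .inl rfl
    · rw [← prepend_head_tail x, ← show a = x ∘ Nat.succ from htail]
      interval_cases x 0 <;> simp
  have hne : ∀ a : ℕ → ℕ, prepend 0 a ≠ prepend 1 a := fun a h => by
    simpa using congrFun h 0
  refine hA ?_
  convert hE.measurableSet_setOf_of_forall_eq_or_eq (continuous_prepend 0).measurable
    (continuous_prepend 1).measurable hne hclass
  ext a
  simp [restrictRel, tailIn, SameTail, hne]

end Baire

/-- Borel graphability is not closed under taking subequivalence relations: on a Polish
space there are analytic equivalence relations `E' ⊆ E''` with `E''` Borel graphable but
`E'` not Borel graphable. -/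
theorem stmt9 :
    ∃ E' E'' : (ℕ → ℕ) → (ℕ → ℕ) → Prop,
      Equivalence E' ∧ Equivalence E'' ∧
      AnalyticSet {p : (ℕ → ℕ) × (ℕ → ℕ) | E' p.1 p.2} ∧
      AnalyticSet {p : (ℕ → ℕ) × (ℕ → ℕ) | E'' p.1 p.2} ∧
      (∀ x y, E' x y → E'' x y) ∧
      BorelGraphable E'' ∧ ¬ BorelGraphable E' := by
  obtain ⟨A, hA, hA_meas⟩ := exists_analyticSet_not_measurableSet
  exact ⟨restrictRel SameTail (tailIn A), SameTail, equivalence_sameTail.restrictRel _,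
    equivalence_sameTail, hA.tailIn.setOf_restrictRel isClosed_setOf_sameTail.analyticSet,
    isClosed_setOf_sameTail.analyticSet, fun _ _ => restrictRel_le equivalence_sameTail.refl,
    .of_measurableSet equivalence_sameTail isClosed_setOf_sameTail.measurableSet,
    not_borelGraphable_restrictRel_sameTail hA_meas⟩
end

section
/- Let Γ be a Polish group acting continuously on a Polish space X. Then the set X_C = {x ∈ X : the orbit Γ·x is countable} is Borel, and the restriction of the orbit equivalence relation to X_C is Borel. -/
/-!
If the orbit of `x` is countable, `G` is covered by the countably many closed cosets of the
stabilizer of `x`, so by the Baire category theorem the stabilizer is open. Conversely an open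
stabilizer meets every coset, so the orbit is `{gₙ • x}` for a dense sequence `gₙ`. Being a closed
subgroup, the stabilizer is open as soon as it contains the `gₙ` lying in some basic neighbourhood
of `1`, which makes `{x | Gx countable}` a countable union of countable intersections of closed
sets, and the orbit relation on it the countable union of the closed graphs of `x ↦ gₙ • x`.
-/

open Set TopologicalSpace MulAction

namespace Subgroup

variable {G : Type*} [Group G] [TopologicalSpace G] [SeparatelyContinuousMul G]

theorem isOpen_of_isClosed_of_countable_quotient [BaireSpace G] (H : Subgroup G)
    (hH : IsClosed (H : Set G)) [Countable (G ⧸ H)] : IsOpen (H : Set G) := by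
  let coset : G ⧸ H → Set G := fun q ↦ Homeomorph.mulLeft q.out⁻¹ ⁻¹' H
  have hcover : ⋃ q, coset q = univ := by
    refine eq_univ_of_forall fun g ↦ mem_iUnion.2 ⟨g, ?_⟩
    exact QuotientGroup.eq.1 (QuotientGroup.out_eq' (g : G ⧸ H))
  obtain ⟨q, g, hg⟩ := nonempty_interior_of_iUnion_of_closed
    (fun q : G ⧸ H ↦ hH.preimage (Homeomorph.mulLeft q.out⁻¹).continuous) hcover
  rw [← Homeomorph.preimage_interior] at hg
  exact H.isOpen_of_mem_nhds (mem_interior_iff_mem_nhds.1 hg)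

end Subgroup

namespace MulAction

variable {G X : Type*} [Group G] [TopologicalSpace G] [MulAction G X]

theorem orbit_subset_range_smul_of_isOpen_stabilizer [SeparatelyContinuousMul G] {ι : Type*}
    {u : ι → G} (hu : DenseRange u) {x : X} (hx : IsOpen (stabilizer G x : Set G)) :
    orbit G x ⊆ range fun i ↦ u i • x := by
  rintro _ ⟨g, rfl⟩
  obtain ⟨i, s, hs, hi⟩ :=
    hu.exists_mem_open (isOpenMap_mul_left g _ hx) ⟨g, 1, one_mem _, mul_one g⟩
  exact ⟨i, by simp only [← hi, mul_smul, mem_stabilizer_iff.1 hs]⟩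

variable [TopologicalSpace X] [ContinuousSMul G X]

theorem isClosed_stabilizer [T1Space X] (x : X) : IsClosed (stabilizer G x : Set G) :=
  isClosed_singleton.preimage (continuous_id.smul continuous_const)

theorem isOpen_stabilizer_of_countable_orbit [SeparatelyContinuousMul G] [BaireSpace G]
    [T1Space X] {x : X} (h : (orbit G x).Countable) : IsOpen (stabilizer G x : Set G) :=
  have := h.to_subtype
  have := (orbitEquivQuotientStabilizer G x).symm.injective.countable
  (stabilizer G x).isOpen_of_isClosed_of_countable_quotient (isClosed_stabilizer x)

theorem countable_orbit_iff_isOpen_stabilizer [SeparatelyContinuousMul G] [BaireSpace G]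
    [SeparableSpace G] [T1Space X] {x : X} :
    (orbit G x).Countable ↔ IsOpen (stabilizer G x : Set G) :=
  ⟨isOpen_stabilizer_of_countable_orbit, fun hx ↦ (countable_range _).mono
    (orbit_subset_range_smul_of_isOpen_stabilizer (denseRange_denseSeq G) hx)⟩

theorem isOpen_stabilizer_iff_exists_basis [SeparatelyContinuousMul G] [T1Space X]
    {B : Set (Set G)} (hB : IsTopologicalBasis B) {u : ℕ → G} (hu : DenseRange u) {x : X} :
    IsOpen (stabilizer G x : Set G) ↔ ∃ t ∈ B, (1 : G) ∈ t ∧ ∀ n, u n ∈ t → u n • x = x := by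
  constructor
  · intro hx
    obtain ⟨t, ht, h1, hts⟩ := hB.exists_subset_of_mem_open (one_mem (stabilizer G x)) hx
    exact ⟨t, ht, h1, fun n hn ↦ hts hn⟩
  · rintro ⟨t, ht, h1, hfix⟩
    have htx : t ⊆ stabilizer G x := calc
      t ⊆ closure (t ∩ range u) := hu.open_subset_closure_inter (hB.isOpen ht)
      _ ⊆ stabilizer G x :=
        (isClosed_stabilizer x).closure_subset_iff.2 fun _ ⟨hgt, n, hn⟩ ↦ hn ▸ hfix n (hn ▸ hgt)
    exact (stabilizer G x).isOpen_of_mem_nhds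
      (Filter.mem_of_superset ((hB.isOpen ht).mem_nhds h1) htx)

variable [SeparatelyContinuousMul G] [BaireSpace G] [SecondCountableTopology G] [T2Space X]
  [MeasurableSpace X] [OpensMeasurableSpace X]

theorem measurableSet_setOf_countable_orbit :
    MeasurableSet {x : X | (orbit G x).Countable} := by
  have hC : {x : X | (orbit G x).Countable} = ⋃ t ∈ countableBasis G, ⋃ (_ : (1 : G) ∈ t),
      ⋂ n, ⋂ (_ : denseSeq G n ∈ t), {x | denseSeq G n • x = x} := by
    ext x
    simp only [mem_ofPred_eq, countable_orbit_iff_isOpen_stabilizer,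
      isOpen_stabilizer_iff_exists_basis (isBasis_countableBasis G) (denseRange_denseSeq G),
      mem_iUnion, mem_iInter, exists_prop]
  rw [hC]
  exact .biUnion (countable_countableBasis G) fun t _ ↦ .iUnion fun _ ↦ .iInter fun n ↦
    .iInter fun _ ↦ (isClosed_eq (continuous_const_smul _) continuous_id).measurableSet

theorem measurableSet_orbitRel_restrict_countable_orbit [SecondCountableTopology X] :
    MeasurableSet {p : X × X | (orbit G p.1).Countable ∧ (orbit G p.2).Countable ∧
      p.2 ∈ orbit G p.1} := by
  let C := {x : X | (orbit G x).Countable}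
  have hE : {p : X × X | (orbit G p.1).Countable ∧ (orbit G p.2).Countable ∧
      p.2 ∈ orbit G p.1} =
      Prod.fst ⁻¹' C ∩ Prod.snd ⁻¹' C ∩ ⋃ n, {p | denseSeq G n • p.1 = p.2} := by
    ext ⟨x, y⟩
    simp only [mem_ofPred_eq, mem_inter_iff, mem_preimage, mem_iUnion, and_assoc]
    refine and_congr_right fun hx ↦ and_congr_right fun _ ↦ ⟨fun hy ↦ ?_, fun ⟨n, hn⟩ ↦ ⟨_, hn⟩⟩
    exact orbit_subset_range_smul_of_isOpen_stabilizer (denseRange_denseSeq G)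
      (isOpen_stabilizer_of_countable_orbit hx) hy
  have hC : MeasurableSet C := measurableSet_setOf_countable_orbit
  rw [hE]
  exact ((hC.preimage measurable_fst).inter (hC.preimage measurable_snd)).inter
    (.iUnion fun n ↦ (isClosed_eq (continuous_fst.const_smul _) continuous_snd).measurableSet)

end MulAction

/-- For a continuous action of a Polish group `Γ` on a Polish space `X`, the set of points
with countable orbit is Borel, and the restriction of the orbit equivalence relation to
this set is Borel. -/
theorem stmt10 {G X : Type*} [TopologicalSpace G] [Group G] [IsTopologicalGroup G]
    [PolishSpace G] [TopologicalSpace X] [PolishSpace X]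
    [MeasurableSpace X] [BorelSpace X]
    [MulAction G X] [ContinuousSMul G X] :
    MeasurableSet {x : X | (MulAction.orbit G x).Countable} ∧
    MeasurableSet {p : X × X | (MulAction.orbit G p.1).Countable ∧
      (MulAction.orbit G p.2).Countable ∧ p.2 ∈ MulAction.orbit G p.1} :=
  ⟨measurableSet_setOf_countable_orbit (G := G),
    measurableSet_orbitRel_restrict_countable_orbit (G := G)⟩
end

section
/- Every computably enumerable equivalence relation on ℕ all of whose equivalence classes are infinite is the connectedness relation of a computable graph of diameter 2. -/
/-- A predicate on `ℕ` is computably enumerable if it is the domain of a partial computable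
function. -/
def CEPred (S : ℕ → Prop) : Prop :=
  ∃ p : ℕ →. Unit, Partrec p ∧ ∀ n, (p n).Dom ↔ S n

/-!
Enumerate the `E`-pairs computably as `e 0, e 1, …`. For each stage `s`, an unbounded search
finds an element `z s` of the class of `(e s).1` exceeding `s` and both entries of `e s`, and
both entries of `e s` are joined to the hub `z s`. Every `E`-pair `(x, y) = e s` is then linked
through `z s`, which gives diameter `2`. Adjacency is decidable because an edge created at stage
`s` has the endpoint `z s > s`, so only the stages below the larger endpoint need inspecting.
-/

namespace ComputablePred

variable {α β : Type*} [Primcodable α] [Primcodable β]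

theorem comp {p : β → Prop} {f : α → β} (hp : ComputablePred p) (hf : Computable f) :
    ComputablePred fun a => p (f a) := by
  classical
  exact Computable.computablePred (hp.decide.comp hf)

protected theorem and {p q : α → Prop} (hp : ComputablePred p) (hq : ComputablePred q) :
    ComputablePred fun a => p a ∧ q a := by
  classical
  exact Computable.computablePred <|
    (Primrec.and.to_comp.comp hp.decide hq.decide).of_eq fun a => by simp

protected theorem or {p q : α → Prop} (hp : ComputablePred p) (hq : ComputablePred q) :
    ComputablePred fun a => p a ∨ q a := by
  classical
  exact Computable.computablePred <|
    (Primrec.or.to_comp.comp hp.decide hq.decide).of_eq fun a => by simp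

theorem eq {f g : α → ℕ} (hf : Computable f) (hg : Computable g) :
    ComputablePred fun a => f a = g a :=
  Primrec.eq.computablePred.comp (hf.pair hg)

theorem exists_lt {p : α → ℕ → Prop} (hp : ComputablePred fun x : α × ℕ => p x.1 x.2)
    {b : α → ℕ} (hb : Computable b) : ComputablePred fun a => ∃ s < b a, p a s := by
  classical
  have hstep : Computable₂ fun (a : α) (q : ℕ × Bool) => q.2 || decide (p a q.1) :=
    Primrec.or.to_comp.comp (Computable.snd.comp Computable.snd)
      (hp.decide.comp (Computable.fst.pair (Computable.fst.comp Computable.snd)))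
  refine Computable.computablePred <|
    (Computable.nat_rec hb (Computable.const false) hstep).of_eq fun a => ?_
  induction b a with
  | zero => simp
  | succ n ih => simp only [Nat.exists_lt_succ_right]; simp [ih]

end ComputablePred

open Nat.Partrec.Code in
theorem CEPred.exists_computable_stage {S : ℕ → Prop} (hS : CEPred S) :
    ∃ A : ℕ → ℕ → Bool, Computable₂ A ∧ ∀ n, S n ↔ ∃ s, A s n = true := by
  obtain ⟨p, hp, hdom⟩ := hS
  obtain ⟨c, hc⟩ := exists_code.mp <| Partrec.nat_iff.mp <|
    hp.map (Computable.const 0).to₂ (g := fun _ _ => (0 : ℕ))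
  refine ⟨fun s n => (evaln s c n).isSome,
    (Primrec.option_isSome.comp (primrec_evaln.comp (Primrec.fst.pair (Primrec.const c) |>.pair
      Primrec.snd))).to_comp, fun n => ?_⟩
  have hev : (eval c n).Dom ↔ S n := by rw [hc]; exact hdom n
  simp only [← hev, Part.dom_iff_mem, evaln_complete, Option.isSome_iff_exists, Option.mem_def]
  exact exists_comm

theorem CEPred.exists_computable_enum {S : ℕ → Prop} (hS : CEPred S) {n₀ : ℕ} (h₀ : S n₀) :
    ∃ f : ℕ → ℕ, Computable f ∧ ∀ n, S n ↔ ∃ k, f k = n := by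
  obtain ⟨A, hA, hSA⟩ := hS.exists_computable_stage
  refine ⟨fun k => bif A k.unpair.1 k.unpair.2 then k.unpair.2 else n₀,
    Computable.cond (hA.comp (Computable.fst.comp Computable.unpair)
      (Computable.snd.comp Computable.unpair)) (Computable.snd.comp Computable.unpair)
      (Computable.const n₀), fun n => ⟨fun hn => ?_, ?_⟩⟩
  · obtain ⟨s, hs⟩ := (hSA n).mp hn
    exact ⟨Nat.pair s n, by simp [hs]⟩
  · rintro ⟨k, rfl⟩
    cases hk : A k.unpair.1 k.unpair.2
    · simpa [hk] using h₀
    · simpa [hk] using (hSA _).mpr ⟨_, hk⟩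

theorem exists_computable_enum_of_cePred_pair {R : ℕ → ℕ → Prop}
    (hR : CEPred fun n => R n.unpair.1 n.unpair.2) {x₀ y₀ : ℕ} (h₀ : R x₀ y₀) :
    ∃ e : ℕ → ℕ × ℕ, Computable e ∧ ∀ x y, R x y ↔ ∃ k, e k = (x, y) := by
  obtain ⟨f, hf, hSf⟩ := hR.exists_computable_enum (n₀ := Nat.pair x₀ y₀) (by simpa using h₀)
  refine ⟨fun k => (f k).unpair, Computable.unpair.comp hf, fun x y => ?_⟩
  have hpair : ∀ a, a.unpair = (x, y) ↔ a = Nat.pair x y := fun a =>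
    ⟨fun h => by rw [← Nat.pair_unpair a, h], fun h => by rw [h, Nat.unpair_pair]⟩
  simpa [hpair] using hSf (Nat.pair x y)

theorem exists_computable_large_witness {R : ℕ → ℕ → Prop} {e : ℕ → ℕ × ℕ} (he : Computable e)
    (hRe : ∀ x y, R x y ↔ ∃ k, e k = (x, y)) (hinf : ∀ x, {y | R x y}.Infinite) :
    ∃ w : ℕ → ℕ → ℕ, Computable₂ w ∧ ∀ x b, R x (w x b) ∧ b < w x b := by
  classical
  let P : ℕ × ℕ → ℕ → Prop := fun q k => (e k).1 = q.1 ∧ q.2 < (e k).2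
  have hek : Computable fun x : (ℕ × ℕ) × ℕ => e x.2 := he.comp Computable.snd
  have hP : ComputablePred fun x : (ℕ × ℕ) × ℕ => P x.1 x.2 :=
    (Primrec.eq.computablePred.comp ((Computable.fst.comp hek).pair
      (Computable.fst.comp Computable.fst))).and
    (Primrec.nat_lt.computablePred.comp ((Computable.snd.comp Computable.fst).pair
      (Computable.snd.comp hek)))
  have hex : ∀ q, ∃ k, P q k := fun ⟨x, b⟩ => by
    obtain ⟨y, hy, hby⟩ := (hinf x).exists_gt b
    obtain ⟨k, hk⟩ := (hRe x y).mp hy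
    exact ⟨k, by simp [P, hk, hby]⟩
  refine ⟨fun x b => (e (Nat.find (hex (x, b)))).2,
    Computable.snd.comp (he.comp (Computable.find hP hex)), fun x b => ?_⟩
  obtain ⟨hx, hb⟩ := Nat.find_spec (hex (x, b))
  exact ⟨(hRe _ _).mpr ⟨_, Prod.ext hx rfl⟩, hb⟩

theorem exists_computable_hub {R : ℕ → ℕ → Prop} {e : ℕ → ℕ × ℕ} (he : Computable e)
    (hRe : ∀ x y, R x y ↔ ∃ k, e k = (x, y)) (hinf : ∀ x, {y | R x y}.Infinite) :
    ∃ z : ℕ → ℕ, Computable z ∧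
      ∀ s, R (e s).1 (z s) ∧ (e s).1 < z s ∧ (e s).2 < z s ∧ s < z s := by
  obtain ⟨w, hw, hwR⟩ := exists_computable_large_witness he hRe hinf
  have hmax : Computable₂ (max : ℕ → ℕ → ℕ) := Primrec.nat_max.to_comp
  refine ⟨fun s => w (e s).1 (max (max (e s).1 (e s).2) s),
    hw.comp (Computable.fst.comp he) (hmax.comp (hmax.comp (Computable.fst.comp he)
      (Computable.snd.comp he)) Computable.id), fun s => ?_⟩
  obtain ⟨hR, hlt⟩ := hwR (e s).1 (max (max (e s).1 (e s).2) s)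
  exact ⟨hR, by dsimp only; omega⟩

section HubGraph

variable (e : ℕ → ℕ × ℕ) (z : ℕ → ℕ)

def hubSpoke (a b : ℕ) : Prop :=
  ∃ s, (a = (e s).1 ∨ a = (e s).2) ∧ b = z s

def hubGraph (a b : ℕ) : Prop :=
  a ≠ b ∧ (hubSpoke e z a b ∨ hubSpoke e z b a)

variable {e z}

theorem hubGraph.symm {a b : ℕ} (h : hubGraph e z a b) : hubGraph e z b a :=
  ⟨h.1.symm, h.2.symm⟩

theorem hubGraph_fst_hub {s : ℕ} (h : (e s).1 ≠ z s) : hubGraph e z (e s).1 (z s) :=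
  ⟨h, .inl ⟨s, .inl rfl, rfl⟩⟩

theorem hubGraph_hub_snd {s : ℕ} (h : z s ≠ (e s).2) : hubGraph e z (z s) (e s).2 :=
  ⟨h, .inr ⟨s, .inr rfl, rfl⟩⟩

theorem Equivalence.of_hubGraph {E : ℕ → ℕ → Prop} (hE : Equivalence E)
    (hpair : ∀ s, E (e s).1 (e s).2) (hhub : ∀ s, E (e s).1 (z s)) {a b : ℕ}
    (h : hubGraph e z a b) : E a b := by
  have hspoke : ∀ {a b}, hubSpoke e z a b → E a b := by
    rintro a b ⟨s, ha | ha, rfl⟩ <;> subst ha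
    · exact hhub s
    · exact hE.trans (hE.symm (hpair s)) (hhub s)
  exact h.2.elim hspoke fun h => hE.symm (hspoke h)

theorem hubSpoke_iff_exists_lt (hz : ∀ s, s < z s) {a b : ℕ} :
    hubSpoke e z a b ↔ ∃ s < b, (a = (e s).1 ∨ a = (e s).2) ∧ b = z s :=
  ⟨fun ⟨s, hs⟩ => ⟨s, hs.2 ▸ hz s, hs⟩, fun ⟨s, _, hs⟩ => ⟨s, hs⟩⟩

theorem computablePred_hubSpoke (he : Computable e) (hzc : Computable z) (hz : ∀ s, s < z s) :
    ComputablePred fun q : ℕ × ℕ => hubSpoke e z q.1 q.2 := by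
  have hes : Computable fun x : (ℕ × ℕ) × ℕ => e x.2 := he.comp Computable.snd
  have ha : Computable fun x : (ℕ × ℕ) × ℕ => x.1.1 := Computable.fst.comp Computable.fst
  have hb : Computable fun x : (ℕ × ℕ) × ℕ => x.1.2 := Computable.snd.comp Computable.fst
  refine (ComputablePred.exists_lt (p := fun q s => (q.1 = (e s).1 ∨ q.1 = (e s).2) ∧ q.2 = z s)
    ?_ Computable.snd).of_eq fun q => (hubSpoke_iff_exists_lt hz).symm
  exact ((ComputablePred.eq ha (Computable.fst.comp hes)).or
    (ComputablePred.eq ha (Computable.snd.comp hes))).and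
    (ComputablePred.eq hb (hzc.comp Computable.snd))

theorem computablePred_hubGraph (he : Computable e) (hzc : Computable z) (hz : ∀ s, s < z s) :
    ComputablePred fun n : ℕ => hubGraph e z n.unpair.1 n.unpair.2 := by
  have hspoke := computablePred_hubSpoke he hzc hz
  have h₁ : Computable fun n : ℕ => n.unpair.1 := Computable.fst.comp Computable.unpair
  have h₂ : Computable fun n : ℕ => n.unpair.2 := Computable.snd.comp Computable.unpair
  exact (ComputablePred.eq h₁ h₂).not.and
    ((hspoke.comp (h₁.pair h₂)).or (hspoke.comp (h₂.pair h₁)))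

end HubGraph

/-- Every computably enumerable equivalence relation on `ℕ` all of whose classes are
infinite is the connectedness relation of a computable graph of diameter `2`. -/
theorem stmt13 (E : ℕ → ℕ → Prop) (hE : Equivalence E)
    (hce : CEPred fun n => E (Nat.unpair n).1 (Nat.unpair n).2)
    (hinf : ∀ x : ℕ, {y : ℕ | E x y}.Infinite) :
    ∃ G : ℕ → ℕ → Prop,
      ComputablePred (fun n => G (Nat.unpair n).1 (Nat.unpair n).2) ∧
      Symmetric G ∧ Irreflexive G ∧
      (∀ x y, E x y ↔ Relation.ReflTransGen G x y) ∧
      (∀ x y, E x y → x ≠ y → (G x y ∨ ∃ z, G x z ∧ G z y)) := by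
  obtain ⟨e, he, hEe⟩ := exists_computable_enum_of_cePred_pair hce (hE.refl 0)
  obtain ⟨z, hzc, hz⟩ := exists_computable_hub he hEe hinf
  have hdiam : ∀ x y, E x y → ∃ m, hubGraph e z x m ∧ hubGraph e z m y := by
    intro x y hxy
    obtain ⟨s, hs⟩ := (hEe x y).mp hxy
    obtain ⟨rfl, rfl⟩ := Prod.ext_iff.mp hs
    obtain ⟨-, hx, hy, -⟩ := hz s
    exact ⟨z s, hubGraph_fst_hub hx.ne, hubGraph_hub_snd hy.ne'⟩
  have hGE : ∀ {a b}, hubGraph e z a b → E a b :=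
    hE.of_hubGraph (fun s => (hEe _ _).mpr ⟨s, rfl⟩) fun s => (hz s).1
  refine ⟨hubGraph e z, computablePred_hubGraph he hzc fun s => (hz s).2.2.2,
    fun _ _ => hubGraph.symm, fun _ h => h.1 rfl, fun x y => ⟨fun hxy => ?_, fun h => ?_⟩,
    fun x y hxy _ => .inr (hdiam x y hxy)⟩
  · obtain ⟨m, hxm, hmy⟩ := hdiam x y hxy
    exact .head hxm (.single hmy)
  · induction h with
    | refl => exact hE.refl x
    | tail _ hab ih => exact hE.trans ih (hGE hab)
end
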